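/- arXiv:1906.00630 — 7 statements merged into one kernel-verified Lean document; each statement's English description precedes it below -/
import Mathlib

section
/- Let C = (c_1, ..., c_k) be a k-cycle on a vertex set V equipped with a fixed-point-free involution x ↦ x̄ such that the 4k vertices c_1, ..., c_k, c̄_1, ..., c̄_k are all distinct. Let C[2] be the graph with edges {x,y}, {x,ȳ}, {x̄,y}, {x̄,ȳ} for each edge {x,y} of C. Let S be the k-sun with cycle (s_1, ..., s_k) and pendant edges {s_i, s̄_{i+1}} (indices mod k), where each s_i ∈ {c_i, c̄_i}, and let S̄ be the image of S under the involution. Then the edge sets of S and S̄ partition the edge set of C[2]. -/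
open SimpleGraph

/-- The blow-up `C[2]` of the `k`-cycle with vertex sequence `c`: for each cycle edge
`{x, y}` it has the four edges `{x,y}, {x,ȳ}, {x̄,y}, {x̄,ȳ}`. -/
def cycleBlowup {V : Type*} (k : ℕ) (σ : V → V) (c : ZMod k → V) : SimpleGraph V :=
  SimpleGraph.fromRel (fun x y => ∃ i : ZMod k,
    (x = c i ∨ x = σ (c i)) ∧ (y = c (i + 1) ∨ y = σ (c (i + 1))))

/-- The `k`-sun `S` with cycle `(s 0, s 1, ...)` and pendant edges `{s i, σ (s (i+1))}`. -/
def sunS {V : Type*} (k : ℕ) (σ : V → V) (s : ZMod k → V) : SimpleGraph V :=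
  SimpleGraph.fromRel (fun x y => ∃ i : ZMod k,
    (x = s i ∧ y = s (i + 1)) ∨ (x = s i ∧ y = σ (s (i + 1))))

/-- The image `S̄` of the sun `S` under the involution `σ`. -/
def sunSbar {V : Type*} (k : ℕ) (σ : V → V) (s : ZMod k → V) : SimpleGraph V :=
  SimpleGraph.fromRel (fun x y => ∃ i : ZMod k,
    (x = σ (s i) ∧ y = σ (s (i + 1))) ∨ (x = σ (s i) ∧ y = s (i + 1)))

/-- Let `C = (c 0, ..., c (k-1))` be a `k`-cycle on a vertex set with a fixed-point-free
involution `σ` such that the `2k` vertices `c i, σ (c i)` are all distinct. Let `S` be the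
`k`-sun with cycle `(s 0, ..., s (k-1))`, `s i ∈ {c i, σ (c i)}`, and pendant edges
`{s i, σ (s (i+1))}`, and let `S̄` be its image under `σ`. Then the edge sets of `S` and
`S̄` partition the edge set of `C[2]`. -/
theorem stmt4 {V : Type*} (k : ℕ) (hk : 3 ≤ k) (σ : V → V)
    (hinv : ∀ x, σ (σ x) = x) (hfpf : ∀ x, σ x ≠ x)
    (c : ZMod k → V)
    (hc : Function.Injective (fun z : ZMod k × Bool => if z.2 then σ (c z.1) else c z.1))
    (s : ZMod k → V) (hs : ∀ i, s i = c i ∨ s i = σ (c i)) :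
    (sunS k σ s).edgeSet ∪ (sunSbar k σ s).edgeSet = (cycleBlowup k σ c).edgeSet ∧
      Disjoint (sunS k σ s).edgeSet (sunSbar k σ s).edgeSet := by

  have hσinj : Function.Injective σ := fun a b h => by
    have h2 := congrArg σ h
    rwa [hinv, hinv] at h2
  have hcc : ∀ i j : ZMod k, c i = c j → i = j := by
    intro i j h
    have h2 := @hc (i, false) (j, false) (by simpa using h)
    simpa using congrArg Prod.fst h2
  have hcσ : ∀ i j : ZMod k, c i ≠ σ (c j) := by
    intro i j h
    have h2 := @hc (i, false) (j, true) (by simpa using h)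
    simpa using congrArg Prod.snd h2
  have hsne : ∀ i j : ZMod k, s i ≠ σ (s j) := by
    intro i j h
    rcases hs i with hi | hi <;> rcases hs j with hj | hj <;> rw [hi, hj] at h
    · exact hcσ i j h
    · rw [hinv] at h
      have hij := hcc i j h; subst hij
      exact hfpf (c i) (hi.symm.trans hj).symm
    · have hij := hcc i j (hσinj h); subst hij
      exact hfpf (c i) (hj.symm.trans hi).symm
    · rw [hinv] at h
      exact hcσ j i h.symm
  have hsinj : ∀ i j : ZMod k, s i = s j → i = j := by
    intro i j h
    rcases hs i with hi | hi <;> rcases hs j with hj | hj <;> rw [hi, hj] at h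
    · exact hcc i j h
    · exact absurd h (hcσ i j)
    · exact absurd h.symm (hcσ j i)
    · exact hcc i j (hσinj h)
  have hmem : ∀ (i : ZMod k) (x : V), (x = c i ∨ x = σ (c i)) ↔ (x = s i ∨ x = σ (s i)) := by
    intro i x
    rcases hs i with h | h <;> rw [h]
    · rw [hinv]
      exact or_comm
  have h20 : ∀ i : ZMod k, i ≠ i + 1 + 1 := by
    intro i h
    rw [add_assoc] at h
    have h2 : (1 + 1 : ZMod k) = 0 := by
      have h3 := h.symm
      rwa [add_eq_left] at h3
    have h3 : ((2 : ℕ) : ZMod k) = 0 := by push_cast; rw [← h2]; ring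
    haveI : NeZero k := ⟨by omega⟩
    have h4 := (ZMod.natCast_eq_zero_iff 2 k).mp h3
    have := Nat.le_of_dvd (by norm_num) h4
    omega
  constructor
  · rw [← SimpleGraph.edgeSet_sup]
    ext e
    induction e using Sym2.ind with
    | _ x y =>
    simp only [SimpleGraph.mem_edgeSet, SimpleGraph.sup_adj, sunS, sunSbar, cycleBlowup,
      SimpleGraph.fromRel_adj]
    constructor
    · rintro (⟨hne, ⟨i, (⟨hx, hy⟩|⟨hx, hy⟩)⟩ | ⟨i, (⟨hy, hx⟩|⟨hy, hx⟩)⟩⟩ |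
              ⟨hne, ⟨i, (⟨hx, hy⟩|⟨hx, hy⟩)⟩ | ⟨i, (⟨hy, hx⟩|⟨hy, hx⟩)⟩⟩)
      · exact ⟨hne, Or.inl ⟨i, (hmem i x).mpr (Or.inl hx), (hmem _ y).mpr (Or.inl hy)⟩⟩
      · exact ⟨hne, Or.inl ⟨i, (hmem i x).mpr (Or.inl hx), (hmem _ y).mpr (Or.inr hy)⟩⟩
      · exact ⟨hne, Or.inr ⟨i, (hmem i y).mpr (Or.inl hy), (hmem _ x).mpr (Or.inl hx)⟩⟩
      · exact ⟨hne, Or.inr ⟨i, (hmem i y).mpr (Or.inl hy), (hmem _ x).mpr (Or.inr hx)⟩⟩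
      · exact ⟨hne, Or.inl ⟨i, (hmem i x).mpr (Or.inr hx), (hmem _ y).mpr (Or.inr hy)⟩⟩
      · exact ⟨hne, Or.inl ⟨i, (hmem i x).mpr (Or.inr hx), (hmem _ y).mpr (Or.inl hy)⟩⟩
      · exact ⟨hne, Or.inr ⟨i, (hmem i y).mpr (Or.inr hy), (hmem _ x).mpr (Or.inr hx)⟩⟩
      · exact ⟨hne, Or.inr ⟨i, (hmem i y).mpr (Or.inr hy), (hmem _ x).mpr (Or.inl hx)⟩⟩
    · rintro ⟨hne, ⟨i, hx, hy⟩ | ⟨i, hy, hx⟩⟩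
      · rcases (hmem i x).mp hx with hx' | hx' <;> rcases (hmem _ y).mp hy with hy' | hy'
        · exact Or.inl ⟨hne, Or.inl ⟨i, Or.inl ⟨hx', hy'⟩⟩⟩
        · exact Or.inl ⟨hne, Or.inl ⟨i, Or.inr ⟨hx', hy'⟩⟩⟩
        · exact Or.inr ⟨hne, Or.inl ⟨i, Or.inr ⟨hx', hy'⟩⟩⟩
        · exact Or.inr ⟨hne, Or.inl ⟨i, Or.inl ⟨hx', hy'⟩⟩⟩
      · rcases (hmem i y).mp hy with hy' | hy' <;> rcases (hmem _ x).mp hx with hx' | hx'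
        · exact Or.inl ⟨hne, Or.inr ⟨i, Or.inl ⟨hy', hx'⟩⟩⟩
        · exact Or.inl ⟨hne, Or.inr ⟨i, Or.inr ⟨hy', hx'⟩⟩⟩
        · exact Or.inr ⟨hne, Or.inr ⟨i, Or.inr ⟨hy', hx'⟩⟩⟩
        · exact Or.inr ⟨hne, Or.inr ⟨i, Or.inl ⟨hy', hx'⟩⟩⟩
  · rw [Set.disjoint_left]
    rintro e he he'
    induction e using Sym2.ind with
    | _ x y =>
      rw [SimpleGraph.mem_edgeSet] at he he'
      rw [sunS, SimpleGraph.fromRel_adj] at he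
      rw [sunSbar, SimpleGraph.fromRel_adj] at he'
      obtain ⟨hne, hS⟩ := he
      obtain ⟨-, hB⟩ := he'
      rcases hS with ⟨i, (⟨hx, hy⟩|⟨hx, hy⟩)⟩ | ⟨i, (⟨hy, hx⟩|⟨hy, hx⟩)⟩ <;>
        rcases hB with ⟨j, (⟨hx', hy'⟩|⟨hx', hy'⟩)⟩ | ⟨j, (⟨hy', hx'⟩|⟨hy', hx'⟩)⟩ <;>
        first
        | exact hsne _ _ (hx.symm.trans hx')
        | exact hsne _ _ (hx'.symm.trans hx)
        | exact hsne _ _ (hy.symm.trans hy')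
        | exact hsne _ _ (hy'.symm.trans hy)
        | (have hj : i + 1 = j := hsinj _ _ (hσinj (hy.symm.trans hy'))
           have h2 : i = j + 1 := hsinj _ _ (hx.symm.trans hx')
           subst hj
           exact h20 i h2)
        | (have hj : i + 1 = j := hsinj _ _ (hσinj (hx.symm.trans hx'))
           have h2 : i = j + 1 := hsinj _ _ (hy.symm.trans hy')
           subst hj
           exact h20 i h2)
end

section
/- Let k ≥ 3 be odd and let D ⊆ {1, 2, ..., (k-1)/2}. The graph on vertex set Z_k × {0,1} with edges {(x,0),(y,0)} and {(x,1),(y,1)} for all x-y ∈ ±D, together with the perfect matching {(x,0),(x,1)} for all x ∈ Z_k, is a regular graph of degree 2|D|+1 admitting a proper edge coloring with 2|D|+1 colors (equivalently, a 1-factorization). -/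
open SimpleGraph

set_option linter.unusedSectionVars false

namespace Viz

variable {V : Type*} [DecidableEq V] [Fintype V]

def Proper (N : ℕ) (c : Sym2 V → ℕ) (A : Finset (Sym2 V)) : Prop :=
  (∀ e ∈ A, c e < N) ∧
  ∀ (v : V) (e f : Sym2 V), e ∈ A → f ∈ A → v ∈ e → v ∈ f → e ≠ f → c e ≠ c f

def Missing (c : Sym2 V → ℕ) (A : Finset (Sym2 V)) (v : V) (γ : ℕ) : Prop :=
  ∀ e ∈ A, v ∈ e → c e ≠ γ

/- ------------ small helpers ------------- -/

lemma mem_of_some {l : List V} {i : ℕ} {a : V} (h : l[i]? = some a) : a ∈ l := by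
  have h1 : i < l.length := by
    by_contra hc
    rw [List.getElem?_eq_none (by omega)] at h
    cases h
  rw [List.getElem?_eq_getElem h1] at h
  have := List.getElem_mem h1
  rwa [Option.some_inj.mp h] at this

lemma lt_length_of_some {l : List V} {i : ℕ} {a : V} (h : l[i]? = some a) : i < l.length := by
  by_contra hc
  rw [List.getElem?_eq_none (by omega)] at h
  cases h

lemma mem_sym2_ex {e : Sym2 V} {x : V} (hx : x ∈ e) : ∃ z, e = s(x, z) := by
  induction e using Sym2.ind with
  | _ a b =>
    rw [Sym2.mem_iff] at hx
    rcases hx with rfl | rfl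
    · exact ⟨b, rfl⟩
    · exact ⟨a, Sym2.eq_swap⟩

lemma eq_sxy_of_mem_mem {e : Sym2 V} {x z : V} (hx : x ∈ e) (hz : z ∈ e) (hne : x ≠ z) :
    e = s(x, z) := by
  obtain ⟨w, rfl⟩ := mem_sym2_ex hx
  rw [Sym2.mem_iff] at hz
  rcases hz with rfl | rfl
  · exact absurd rfl hne
  · rfl

/-- There is a color `< N` missing at `v` whenever fewer than `N` edges of `A` contain `v`. -/
lemma exists_missing (c : Sym2 V → ℕ) (A : Finset (Sym2 V)) (v : V) {N : ℕ}
    (hcard : (A.filter (fun e => v ∈ e)).card < N) :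
    ∃ γ < N, Missing c A v γ := by
  classical
  have h1 : ((A.filter (fun e => v ∈ e)).image c).card < N :=
    lt_of_le_of_lt (Finset.card_image_le) hcard
  have h2 : (Finset.range N \ (A.filter (fun e => v ∈ e)).image c).Nonempty := by
    rw [← Finset.card_pos]
    have := Finset.le_card_sdiff ((A.filter (fun e => v ∈ e)).image c) (Finset.range N)
    rw [Finset.card_range] at this
    omega
  obtain ⟨γ, hγ⟩ := h2
  rw [Finset.mem_sdiff, Finset.mem_range] at hγ
  refine ⟨γ, hγ.1, ?_⟩
  intro e he hve hce
  exact hγ.2 (Finset.mem_image.mpr ⟨e, Finset.mem_filter.mpr ⟨he, hve⟩, hce⟩)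

/-- Color the single uncolored edge `s(x,z)` with a color missing at both endpoints. -/
lemma finish {E : Finset (Sym2 V)} {N : ℕ} {x z : V} {c : Sym2 V → ℕ} {γ : ℕ}
    (hmem : s(x, z) ∈ E) (hprop : Proper N c (E.erase s(x, z))) (hγN : γ < N)
    (hx : Missing c (E.erase s(x, z)) x γ) (hz : Missing c (E.erase s(x, z)) z γ) :
    ∃ c', Proper N c' E := by
  classical
  refine ⟨Function.update c (s(x, z)) γ, ?_, ?_⟩
  · intro e he
    by_cases h : e = s(x, z)
    · rw [h, Function.update_self]; exact hγN
    · rw [Function.update_of_ne h]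
      exact hprop.1 e (Finset.mem_erase.mpr ⟨h, he⟩)
  · intro v e f he hf hve hvf hef
    by_cases h1 : e = s(x, z) <;> by_cases h2 : f = s(x, z)
    · exact absurd (h1.trans h2.symm) hef
    · rw [h1, Function.update_self, Function.update_of_ne h2]
      have hf' : f ∈ E.erase s(x, z) := Finset.mem_erase.mpr ⟨h2, hf⟩
      rw [h1, Sym2.mem_iff] at hve
      rcases hve with rfl | rfl
      · exact fun hc => hx f hf' hvf hc.symm
      · exact fun hc => hz f hf' hvf hc.symm
    · rw [h2, Function.update_self, Function.update_of_ne h1]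
      have he' : e ∈ E.erase s(x, z) := Finset.mem_erase.mpr ⟨h1, he⟩
      rw [h2, Sym2.mem_iff] at hvf
      rcases hvf with rfl | rfl
      · exact hx e he' hve
      · exact hz e he' hve
    · rw [Function.update_of_ne h1, Function.update_of_ne h2]
      exact hprop.2 v e f (Finset.mem_erase.mpr ⟨h1, he⟩) (Finset.mem_erase.mpr ⟨h2, hf⟩)
        hve hvf hef

/- ------------ Kempe swap machinery ------------- -/

section Swap

variable {N : ℕ} (c : Sym2 V → ℕ) (A : Finset (Sym2 V)) (α β : ℕ) (w₀ : V)

/-- The `αβ`-subgraph of a coloring. -/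
def Hgraph : SimpleGraph V :=
  SimpleGraph.fromEdgeSet {e | e ∈ A ∧ (c e = α ∨ c e = β)}

/-- Swap colors `α`, `β` on the connected component of `w₀` in the `αβ`-subgraph. -/
noncomputable def swapC : Sym2 V → ℕ := fun e =>
  letI := Classical.propDecidable
    (e ∈ A ∧ (c e = α ∨ c e = β) ∧ (∃ u ∈ e, (Hgraph c A α β).Reachable u w₀))
  if e ∈ A ∧ (c e = α ∨ c e = β) ∧ (∃ u ∈ e, (Hgraph c A α β).Reachable u w₀) then
    (if c e = α then β else α) else c e

variable {c A α β w₀}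

lemma hgraph_adj {a b : V} :
    (Hgraph c A α β).Adj a b ↔ (s(a, b) ∈ A ∧ (c s(a, b) = α ∨ c s(a, b) = β)) ∧ a ≠ b := by
  rw [Hgraph, fromEdgeSet_adj]; rfl

lemma reachable_of_mem_touched (hA : ∀ e ∈ A, ¬ e.IsDiag) {e : Sym2 V} {v : V}
    (he : e ∈ A ∧ (c e = α ∨ c e = β) ∧ ∃ u ∈ e, (Hgraph c A α β).Reachable u w₀)
    (hv : v ∈ e) : (Hgraph c A α β).Reachable v w₀ := by
  obtain ⟨heA, hcol, u, hu, hreach⟩ := he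
  by_cases huv : u = v
  · rwa [huv] at hreach
  · have hadj : (Hgraph c A α β).Adj u v := by
      rw [hgraph_adj]
      refine ⟨⟨?_, ?_⟩, huv⟩
      · rwa [← eq_sxy_of_mem_mem hu hv huv]
      · rwa [← eq_sxy_of_mem_mem hu hv huv]
    exact (hadj.symm.reachable).trans hreach

lemma swap_proper (hA : ∀ e ∈ A, ¬ e.IsDiag) (hαβ : α ≠ β) (hαN : α < N) (hβN : β < N)
    (hprop : Proper N c A) : Proper N (swapC c A α β w₀) A := by
  constructor
  · intro e he
    rw [swapC]
    split
    · split <;> assumption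
    · exact hprop.1 e he
  · intro v e f he hf hve hvf hef
    rw [swapC, swapC]
    by_cases h1 : e ∈ A ∧ (c e = α ∨ c e = β) ∧ ∃ u ∈ e, (Hgraph c A α β).Reachable u w₀ <;>
      by_cases h2 : f ∈ A ∧ (c f = α ∨ c f = β) ∧ ∃ u ∈ f, (Hgraph c A α β).Reachable u w₀
    · rw [if_pos h1, if_pos h2]
      have hcc := hprop.2 v e f he hf hve hvf hef
      rcases h1.2.1 with hce | hce <;> rcases h2.2.1 with hcf | hcf
      · exact absurd (hce.trans hcf.symm) hcc
      · rw [if_pos hce, if_neg (fun h => hαβ (h.symm.trans hcf))]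
        exact hαβ.symm
      · rw [if_neg (fun h => hαβ (h.symm.trans hce)), if_pos hcf]
        exact hαβ
      · exact absurd (hce.trans hcf.symm) hcc
    · rw [if_pos h1, if_neg h2]
      have hvr : (Hgraph c A α β).Reachable v w₀ := reachable_of_mem_touched hA h1 hve
      have hcf : ¬(c f = α ∨ c f = β) := by
        intro hcol
        exact h2 ⟨hf, hcol, v, hvf, hvr⟩
      push_neg at hcf
      rcases h1.2.1 with hce | hce
      · rw [if_pos hce]; exact fun h => hcf.2 h.symm
      · rw [if_neg (fun h => hαβ (h.symm.trans hce))]; exact fun h => hcf.1 h.symm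
    · rw [if_neg h1, if_pos h2]
      have hvr : (Hgraph c A α β).Reachable v w₀ := reachable_of_mem_touched hA h2 hvf
      have hce : ¬(c e = α ∨ c e = β) := by
        intro hcol
        exact h1 ⟨he, hcol, v, hve, hvr⟩
      push_neg at hce
      rcases h2.2.1 with hcf | hcf
      · rw [if_pos hcf]; exact fun h => hce.2 h
      · rw [if_neg (fun h => hαβ (h.symm.trans hcf))]; exact fun h => hce.1 h
    · rw [if_neg h1, if_neg h2]
      exact hprop.2 v e f he hf hve hvf hef

lemma swap_missing_out (hA : ∀ e ∈ A, ¬ e.IsDiag) {v : V}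
    (hv : ¬ (Hgraph c A α β).Reachable v w₀) {γ : ℕ} (hγ : Missing c A v γ) :
    Missing (swapC c A α β w₀) A v γ := by
  intro e he hve
  rw [swapC]
  split
  · next h => exact absurd (reachable_of_mem_touched hA h hve) hv
  · exact hγ e he hve

lemma swap_missing_in (hA : ∀ e ∈ A, ¬ e.IsDiag) {v : V} (hαβ : α ≠ β)
    (hv : (Hgraph c A α β).Reachable v w₀) (hβ : Missing c A v β) :
    Missing (swapC c A α β w₀) A v α := by
  intro e he hve
  rw [swapC]
  split
  · next h =>
    rcases h.2.1 with hce | hce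
    · rw [if_pos hce]; exact Ne.symm hαβ
    · exact absurd hce (hβ e he hve)
  · next h =>
    intro hcon
    exact h ⟨he, Or.inl hcon, v, hve, hv⟩

end Swap

/- ------------ path lemmas ------------- -/

section Paths

variable {G : SimpleGraph V}

lemma closed_aux (h2 : ∀ (z a b c' : V), G.Adj z a → G.Adj z b → G.Adj z c' → a = b ∨ a = c' ∨ b = c') :
    ∀ {u v : V} (p : G.Walk u v), p.IsPath →
      (∀ a b, G.Adj v a → G.Adj v b → a = b) →
      ∀ (w₀ : V), (∀ b, G.Adj u b → b = w₀ ∨ b ∈ p.support) →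
      ∀ a ∈ p.support, ∀ b, G.Adj a b → b = w₀ ∨ b ∈ p.support := by
  intro u v p
  induction p with
  | nil =>
    intro _ hv w₀ hu a ha b hab
    rw [Walk.support_nil, List.mem_singleton] at ha
    subst ha
    exact hu b hab
  | @cons u u₁ v h q ih =>
    intro hp hv w₀ hu a ha b hab
    rw [Walk.support_cons, List.mem_cons] at ha
    rcases ha with rfl | ha
    · exact hu b hab
    · have hq : q.IsPath := ((Walk.cons_isPath_iff h q).mp hp).1
      have hxq : u ∉ q.support := ((Walk.cons_isPath_iff h q).mp hp).2
      have hu₁ : ∀ b, G.Adj u₁ b → b = u ∨ b ∈ q.support := by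
        intro b hb
        cases q with
        | nil => exact Or.inl (hv b u hb h.symm)
        | @cons _ y _ h' q' =>
          rcases h2 u₁ b u y hb h.symm h' with h'' | h'' | h''
          · exact Or.inl h''
          · refine Or.inr ?_
            rw [h'', Walk.support_cons]
            exact List.mem_cons_of_mem _ q'.start_mem_support
          · exfalso
            apply hxq
            rw [h'', Walk.support_cons]
            exact List.mem_cons_of_mem _ q'.start_mem_support
      rcases ih hq hv u hu₁ a ha b hab with h' | h'
      · refine Or.inr ?_
        rw [h', Walk.support_cons]
        exact List.mem_cons_self
      · refine Or.inr ?_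
        rw [Walk.support_cons]
        exact List.mem_cons_of_mem _ h'

lemma reach_in_support
    (h2 : ∀ (z a b c' : V), G.Adj z a → G.Adj z b → G.Adj z c' → a = b ∨ a = c' ∨ b = c')
    {u v : V} (p : G.Walk u v) (hp : p.IsPath)
    (hu1 : ∀ a b, G.Adj u a → G.Adj u b → a = b)
    (hv1 : ∀ a b, G.Adj v a → G.Adj v b → a = b)
    (huv : u ≠ v) {z : V} (hz : G.Reachable u z) : z ∈ p.support := by
  have hclosed : ∀ a ∈ p.support, ∀ b, G.Adj a b → b ∈ p.support := by
    have hu : ∀ b, G.Adj u b → b = u ∨ b ∈ p.support := by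
      intro b hb
      cases p with
      | nil => exact absurd rfl huv
      | @cons _ y _ h q =>
        refine Or.inr ?_
        rw [hu1 b y hb h, Walk.support_cons]
        exact List.mem_cons_of_mem _ q.start_mem_support
    have hcl := closed_aux h2 p hp hv1 u hu
    intro a ha b hab
    rcases hcl a ha b hab with rfl | h'
    · exact p.start_mem_support
    · exact h'
  have haux : ∀ (a z' : V), (q : G.Walk a z') → a ∈ p.support → z' ∈ p.support := by
    intro a z' q
    induction q with
    | nil => exact fun ha => ha
    | cons h q ih => exact fun ha => ih (hclosed _ ha _ h)
  obtain ⟨q⟩ := hz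
  exact haux u z q p.start_mem_support

lemma internal_two {u v : V} (p : G.Walk u v) :
    p.IsPath → ∀ {w : V}, w ∈ p.support → w ≠ u → w ≠ v →
    ∃ a b, a ≠ b ∧ G.Adj w a ∧ G.Adj w b := by
  induction p with
  | nil =>
    intro _ w hw hwu _
    rw [Walk.support_nil, List.mem_singleton] at hw
    exact absurd hw hwu
  | @cons u u₁ v h q ih =>
    intro hp w hw hwu hwv
    rw [Walk.support_cons, List.mem_cons] at hw
    rcases hw with rfl | hw
    · exact absurd rfl hwu
    · by_cases hwu₁ : w = u₁
      · subst hwu₁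
        cases q with
        | nil => exact absurd rfl hwv
        | @cons _ y _ h' q' =>
          refine ⟨u, y, ?_, h.symm, h'⟩
          intro heq
          apply ((Walk.cons_isPath_iff h _).mp hp).2
          rw [heq, Walk.support_cons]
          exact List.mem_cons_of_mem _ q'.start_mem_support
      · exact ih ((Walk.cons_isPath_iff h q).mp hp).1 hw hwu₁ hwv

lemma three_ends
    (h2 : ∀ (z a b c' : V), G.Adj z a → G.Adj z b → G.Adj z c' → a = b ∨ a = c' ∨ b = c')
    {u v w : V} (huv : u ≠ v) (huw : u ≠ w) (hvw : v ≠ w)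
    (hu1 : ∀ a b, G.Adj u a → G.Adj u b → a = b)
    (hv1 : ∀ a b, G.Adj v a → G.Adj v b → a = b)
    (hw1 : ∀ a b, G.Adj w a → G.Adj w b → a = b)
    (r1 : G.Reachable u v) (r2 : G.Reachable u w) : False := by
  classical
  obtain ⟨q⟩ := r1
  have hw' : w ∈ (q.toPath : G.Walk u v).support :=
    reach_in_support h2 _ q.toPath.isPath hu1 hv1 huv r2
  obtain ⟨a, b, hab, ha, hb⟩ :=
    internal_two (q.toPath : G.Walk u v) q.toPath.isPath hw' (Ne.symm huw) (Ne.symm hvw)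
  exact hab (hw1 a b ha hb)

lemma reach_avoid {G G' : SimpleGraph V} {x u₀ z : V}
    (hnbr : ∀ u, G.Adj x u → u = u₀) (hreach : G.Reachable x z) (hxz : x ≠ z)
    (hsub : ∀ a b, G.Adj a b → a ≠ x → b ≠ x → G'.Adj a b) : G'.Reachable u₀ z := by
  classical
  obtain ⟨q⟩ := hreach
  obtain ⟨wlk, hwlk⟩ : ∃ wlk : G.Walk x z, wlk.IsPath := ⟨q.toPath, q.toPath.isPath⟩
  cases wlk with
  | nil => exact absurd rfl hxz
  | @cons _ b _ h q' =>
    have hb := hnbr _ h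
    subst hb
    rw [Walk.cons_isPath_iff] at hwlk
    obtain ⟨hq', hxs⟩ := hwlk
    have hedges : ∀ e ∈ q'.edges, e ∈ G'.edgeSet := by
      intro e he
      induction e using Sym2.ind with
      | _ a b' =>
        have hadj := q'.adj_of_mem_edges he
        have ha : a ∈ q'.support := q'.fst_mem_support_of_mem_edges he
        have hb' : b' ∈ q'.support := q'.snd_mem_support_of_mem_edges he
        rw [mem_edgeSet]
        exact hsub a b' hadj (fun hh => hxs (hh ▸ ha)) (fun hh => hxs (hh ▸ hb'))
    exact ⟨q'.transfer G' hedges⟩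

end Paths

/- ------------ fans and rotations ------------- -/

/-- `b` follows `a` in the list `l`. -/
def FanNext (l : List V) (a b : V) : Prop := ∃ i : ℕ, l[i]? = some a ∧ l[i + 1]? = some b

lemma fanNext_nil {a b : V} : ¬ FanNext ([] : List V) a b := by
  rintro ⟨i, h1, _⟩
  simp at h1

lemma fanNext_single {y a b : V} : ¬ FanNext [y] a b := by
  rintro ⟨i, h1, h2⟩
  have := lt_length_of_some h2
  simp at this

lemma fanNext_cons_cons {p q a b : V} {t : List V} :
    FanNext (a :: b :: t) p q ↔ (p = a ∧ q = b) ∨ FanNext (b :: t) p q := by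
  constructor
  · rintro ⟨i, h1, h2⟩
    cases i with
    | zero =>
      simp only [List.getElem?_cons_zero, Option.some_inj] at h1
      simp only [List.getElem?_cons_succ, List.getElem?_cons_zero, Option.some_inj] at h2
      exact Or.inl ⟨h1.symm, h2.symm⟩
    | succ i =>
      rw [List.getElem?_cons_succ] at h1
      rw [List.getElem?_cons_succ] at h2
      exact Or.inr ⟨i, h1, h2⟩
  · rintro (⟨rfl, rfl⟩ | ⟨i, h1, h2⟩)
    · exact ⟨0, rfl, by simp⟩
    · exact ⟨i + 1, by rwa [List.getElem?_cons_succ], by rwa [List.getElem?_cons_succ]⟩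

lemma fanNext_mem {l : List V} {a b : V} (h : FanNext l a b) : a ∈ l ∧ b ∈ l := by
  obtain ⟨i, h1, h2⟩ := h
  exact ⟨mem_of_some h1, mem_of_some h2⟩

lemma fanNext_uniq {l : List V} (hnd : l.Nodup) {a b b' : V}
    (h : FanNext l a b) (h' : FanNext l a b') : b = b' := by
  obtain ⟨i, h1, h2⟩ := h
  obtain ⟨j, h1', h2'⟩ := h'
  have hij : i = j :=
    (List.getElem?_inj (lt_length_of_some h1) hnd).mp (h1.trans h1'.symm)
  subst hij
  rw [h2] at h2'
  exact Option.some_inj.mp h2'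

lemma fanNext_inj {l : List V} (hnd : l.Nodup) {a a' b : V}
    (h : FanNext l a b) (h' : FanNext l a' b) : a = a' := by
  obtain ⟨i, h1, h2⟩ := h
  obtain ⟨j, h1', h2'⟩ := h'
  have hij : i + 1 = j + 1 :=
    (List.getElem?_inj (lt_length_of_some h2) hnd).mp (h2.trans h2'.symm)
  have : i = j := by omega
  subst this
  rw [h1] at h1'
  exact Option.some_inj.mp h1'

lemma fanNext_ne_head {l : List V} (hnd : l.Nodup) {y a b : V} (hy : l.head? = some y)
    (h : FanNext l a b) : b ≠ y := by
  obtain ⟨i, h1, h2⟩ := h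
  rw [List.head?_eq_getElem?] at hy
  intro hby
  subst hby
  have := (List.getElem?_inj (lt_length_of_some h2) hnd).mp (h2.trans hy.symm)
  omega

lemma fanNext_ne_last {l : List V} (hne : l ≠ []) {a b : V} (h : FanNext l a b) :
    a ≠ l.getLast hne ∨ ¬ l.Nodup := by
  by_cases hnd : l.Nodup
  · left
    obtain ⟨i, h1, h2⟩ := h
    have hlen := lt_length_of_some h2
    intro hlast
    rw [List.getLast_eq_getElem] at hlast
    have h1' : l[i]? = l[l.length - 1]? := by
      rw [h1, List.getElem?_eq_getElem (by omega)]
      rw [hlast]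
    have := (List.getElem?_inj (lt_length_of_some h1) hnd).mp h1'
    omega
  · exact Or.inr hnd

/-- If `z ∈ l` and `z` is not the last element, it has a successor. -/
lemma next_of_mem {l : List V} (hne : l ≠ []) {z : V} (hz : z ∈ l)
    (hlast : z ≠ l.getLast hne) : ∃ w, FanNext l z w := by
  obtain ⟨i, hi, hiz⟩ := List.getElem_of_mem hz
  have hil : i < l.length - 1 := by
    rcases Nat.lt_or_ge i (l.length - 1) with h | h
    · exact h
    · exfalso
      have : i = l.length - 1 := by omega
      subst this
      rw [List.getLast_eq_getElem] at hlast
      exact hlast hiz.symm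
  exact ⟨l[i + 1], ⟨i, by rw [List.getElem?_eq_getElem hi, hiz],
    List.getElem?_eq_getElem (by omega)⟩⟩

variable (c : Sym2 V → ℕ) (x : V) in
/-- Rotate the fan: each fan edge `s(x, l[i])` receives the color of `s(x, l[i+1])`. -/
def rotC : List V → Sym2 V → ℕ
  | [], e => c e
  | [_], e => c e
  | a :: b :: t, e => if e = s(x, a) then c s(x, b) else rotC (b :: t) e

lemma rotC_eq_of_ne {c : Sym2 V → ℕ} {x : V} {l : List V} {e : Sym2 V}
    (h : ∀ z w, FanNext l z w → e ≠ s(x, z)) : rotC c x l e = c e := by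
  induction l with
  | nil => rfl
  | cons a t ih =>
    cases t with
    | nil => rfl
    | cons b t' =>
      rw [rotC, if_neg (h a b (fanNext_cons_cons.mpr (Or.inl ⟨rfl, rfl⟩)))]
      exact ih (fun z w hzw => h z w (fanNext_cons_cons.mpr (Or.inr hzw)))

lemma rotC_nonx {c : Sym2 V → ℕ} {x : V} {l : List V} {e : Sym2 V} (h : x ∉ e) :
    rotC c x l e = c e :=
  rotC_eq_of_ne (fun z _ _ hc => h (hc ▸ Sym2.mem_mk_left x z))

lemma rotC_next {c : Sym2 V → ℕ} {x : V} {l : List V} (hnd : l.Nodup) {z w : V}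
    (h : FanNext l z w) : rotC c x l (s(x, z)) = c s(x, w) := by
  induction l with
  | nil => exact absurd h fanNext_nil
  | cons a t ih =>
    cases t with
    | nil => exact absurd h fanNext_single
    | cons b t' =>
      rw [fanNext_cons_cons] at h
      rcases h with ⟨rfl, rfl⟩ | h
      · rw [rotC, if_pos rfl]
      · have hza : z ≠ a := by
          intro hc
          subst hc
          exact (List.nodup_cons.mp hnd).1 (fanNext_mem h).1
        rw [rotC, if_neg (fun hc => hza (Sym2.congr_right.mp hc))]
        exact ih (List.nodup_cons.mp hnd).2 h

/-- A Vizing fan at `x` with first (uncolored) edge `s(x,y)`. -/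
structure IsFan (E : Finset (Sym2 V)) (c : Sym2 V → ℕ) (x y : V) (l : List V) : Prop where
  nonempty : l ≠ []
  head : l.head? = some y
  nodup : l.Nodup
  memE : ∀ z ∈ l, s(x, z) ∈ E
  nex : ∀ z ∈ l, z ≠ x
  chain : ∀ (a b : V), FanNext l a b → ∀ e ∈ E, a ∈ e → x ∉ e → c e ≠ c s(x, b)

section Rot

variable {E : Finset (Sym2 V)} {N : ℕ} {c : Sym2 V → ℕ} {x y : V} {l : List V}

lemma fan_head_mem (hfan : IsFan E c x y l) : y ∈ l := by
  have h := hfan.head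
  rw [List.head?_eq_getElem?] at h
  exact mem_of_some h

lemma rot_xedge_val (hfan : IsFan E c x y l) {z : V} (hzE : s(x, z) ∈ E)
    (hzlast : z ≠ l.getLast hfan.nonempty) :
    ∃ z', rotC c x l (s(x, z)) = c s(x, z') ∧ s(x, z') ∈ E.erase s(x, y) ∧
      (FanNext l z z' ∨ (z ∉ l ∧ z' = z)) := by
  classical
  by_cases hnext : ∃ w, FanNext l z w
  · obtain ⟨w, hw⟩ := hnext
    refine ⟨w, rotC_next hfan.nodup hw, ?_, Or.inl hw⟩
    rw [Finset.mem_erase]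
    refine ⟨?_, hfan.memE w (fanNext_mem hw).2⟩
    intro hc
    exact fanNext_ne_head hfan.nodup hfan.head hw (Sym2.congr_right.mp hc)
  · push_neg at hnext
    have hznl : z ∉ l := by
      intro hmem
      obtain ⟨w, hw⟩ := next_of_mem hfan.nonempty hmem hzlast
      exact hnext w hw
    refine ⟨z, ?_, ?_, Or.inr ⟨hznl, rfl⟩⟩
    · refine rotC_eq_of_ne ?_
      intro z₀ w₀ h₀ hc
      rw [Sym2.congr_right] at hc
      subst hc
      exact hnext w₀ h₀
    · rw [Finset.mem_erase]
      refine ⟨?_, hzE⟩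
      intro hc
      rw [Sym2.congr_right] at hc
      exact hznl (hc ▸ fan_head_mem hfan)

lemma rot_proper (hprop : Proper N c (E.erase s(x, y))) (hfan : IsFan E c x y l) :
    Proper N (rotC c x l) (E.erase s(x, l.getLast hfan.nonempty)) := by
  classical
  constructor
  · intro e he
    rw [Finset.mem_erase] at he
    by_cases hx : x ∈ e
    · obtain ⟨z, rfl⟩ := mem_sym2_ex hx
      have hzlast : z ≠ l.getLast hfan.nonempty := fun hc => he.1 (by rw [hc])
      obtain ⟨z', hv, hzA, _⟩ := rot_xedge_val hfan he.2 hzlast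
      rw [hv]
      exact hprop.1 _ hzA
    · rw [rotC_nonx hx]
      refine hprop.1 e (Finset.mem_erase.mpr ⟨?_, he.2⟩)
      intro hc
      exact hx (hc ▸ Sym2.mem_mk_left x y)
  · intro v e f he hf hve hvf hef
    have key : ∀ e' f' : Sym2 V, e' ∈ E.erase s(x, l.getLast hfan.nonempty) →
        f' ∈ E.erase s(x, l.getLast hfan.nonempty) →
        v ∈ e' → v ∈ f' → e' ≠ f' → x ∈ e' → x ∉ f' →
        rotC c x l e' ≠ rotC c x l f' := by
      intro e' f' he' hf' hve' hvf' hef' hxe hxf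
      rw [Finset.mem_erase] at he' hf'
      obtain ⟨a, rfl⟩ := mem_sym2_ex hxe
      have halast : a ≠ l.getLast hfan.nonempty := fun hc => he'.1 (by rw [hc])
      rw [Sym2.mem_iff] at hve'
      rcases hve' with rfl | hva
      · exact absurd hvf' hxf
      · have hvaf : a ∈ f' := hva ▸ hvf'
        obtain ⟨a', hv1, hv2, hv3⟩ := rot_xedge_val hfan he'.2 halast
        rw [hv1, rotC_nonx hxf]
        rcases hv3 with hnext | ⟨hnl, heq⟩
        · intro hc
          exact (hfan.chain a a' hnext f' hf'.2 hvaf hxf) hc.symm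
        · rw [heq]
          have he'A : s(x, a) ∈ E.erase s(x, y) := Finset.mem_erase.mpr
            ⟨fun hc => hnl ((Sym2.congr_right.mp hc) ▸ fan_head_mem hfan), he'.2⟩
          have hf'A : f' ∈ E.erase s(x, y) := Finset.mem_erase.mpr
            ⟨fun hc => hxf (hc ▸ Sym2.mem_mk_left x y), hf'.2⟩
          exact hprop.2 a (s(x, a)) f' he'A hf'A (Sym2.mem_mk_right x a) hvaf hef'
    by_cases hxe : x ∈ e <;> by_cases hxf : x ∈ f
    · obtain ⟨a, rfl⟩ := mem_sym2_ex hxe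
      obtain ⟨b, rfl⟩ := mem_sym2_ex hxf
      have hab : a ≠ b := fun hc => hef (by rw [hc])
      have halast : a ≠ l.getLast hfan.nonempty :=
        fun hc => (Finset.mem_erase.mp he).1 (by rw [hc])
      have hblast : b ≠ l.getLast hfan.nonempty :=
        fun hc => (Finset.mem_erase.mp hf).1 (by rw [hc])
      obtain ⟨a', ha1, ha2, ha3⟩ := rot_xedge_val hfan (Finset.mem_erase.mp he).2 halast
      obtain ⟨b', hb1, hb2, hb3⟩ := rot_xedge_val hfan (Finset.mem_erase.mp hf).2 hblast
      rw [ha1, hb1]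
      have hab' : a' ≠ b' := by
        rcases ha3 with hna | ⟨hnla, rfl⟩ <;> rcases hb3 with hnb | ⟨hnlb, rfl⟩
        · intro hc; subst hc; exact hab (fanNext_inj hfan.nodup hna hnb)
        · intro hc; rw [hc] at hna; exact hnlb (fanNext_mem hna).2
        · intro hc; rw [← hc] at hnb; exact hnla (fanNext_mem hnb).2
        · exact hab
      exact hprop.2 x (s(x, a')) (s(x, b')) ha2 hb2 (Sym2.mem_mk_left _ _)
        (Sym2.mem_mk_left _ _) (fun hcc => hab' (Sym2.congr_right.mp hcc))
    · exact key e f he hf hve hvf hef hxe hxf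
    · exact fun hc => key f e hf he hvf hve (Ne.symm hef) hxf hxe hc.symm
    · rw [rotC_nonx hxe, rotC_nonx hxf]
      refine hprop.2 v e f ?_ ?_ hve hvf hef
      · exact Finset.mem_erase.mpr
          ⟨fun hc => hxe (hc ▸ Sym2.mem_mk_left x y), (Finset.mem_erase.mp he).2⟩
      · exact Finset.mem_erase.mpr
          ⟨fun hc => hxf (hc ▸ Sym2.mem_mk_left x y), (Finset.mem_erase.mp hf).2⟩

lemma rot_missing_x (hfan : IsFan E c x y l) {γ : ℕ}
    (hγ : Missing c (E.erase s(x, y)) x γ) :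
    Missing (rotC c x l) (E.erase s(x, l.getLast hfan.nonempty)) x γ := by
  intro e he hxe
  rw [Finset.mem_erase] at he
  obtain ⟨z, rfl⟩ := mem_sym2_ex hxe
  have hzlast : z ≠ l.getLast hfan.nonempty := fun hc => he.1 (by rw [hc])
  obtain ⟨z', h1, h2, _⟩ := rot_xedge_val hfan he.2 hzlast
  rw [h1]
  exact hγ _ h2 (Sym2.mem_mk_left x z')

end Rot

section Extend

variable {E : Finset (Sym2 V)} {N : ℕ} {c : Sym2 V → ℕ} {x y : V}

lemma fan_append (hE : ∀ e ∈ E, ¬ e.IsDiag) {l : List V} (hfan : IsFan E c x y l) {z : V}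
    (hzl : z ∉ l) (hzE : s(x, z) ∈ E)
    (hchain : ∀ e ∈ E, l.getLast hfan.nonempty ∈ e → x ∉ e → c e ≠ c s(x, z)) :
    IsFan E c x y (l ++ [z]) where
  nonempty := by simp
  head := by
    cases hl : l with
    | nil => exact absurd hl hfan.nonempty
    | cons a t =>
      have h := hfan.head
      rw [hl] at h
      simpa using h
  nodup := by
    rw [List.nodup_append]
    refine ⟨hfan.nodup, List.nodup_singleton z, ?_⟩
    intro a ha b hb
    rw [List.mem_singleton] at hb
    subst hb
    intro h
    subst h
    exact hzl ha
  memE := by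
    intro w hw
    rw [List.mem_append, List.mem_singleton] at hw
    rcases hw with hw | rfl
    · exact hfan.memE w hw
    · exact hzE
  nex := by
    intro w hw
    rw [List.mem_append, List.mem_singleton] at hw
    rcases hw with hw | rfl
    · exact hfan.nex w hw
    · intro hcon
      subst hcon
      exact hE _ hzE (by rw [Sym2.mk_isDiag_iff])
  chain := by
    intro a b hab
    obtain ⟨i, h1, h2⟩ := hab
    have hlen2 := lt_length_of_some h2
    rw [List.length_append, List.length_singleton] at hlen2
    have hi : i < l.length := by omega
    rw [List.getElem?_append, if_pos hi] at h1
    rcases Nat.lt_or_ge (i + 1) l.length with h | h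
    · rw [List.getElem?_append, if_pos h] at h2
      exact hfan.chain a b ⟨i, h1, h2⟩
    · have hieq : i + 1 = l.length := by omega
      rw [List.getElem?_append_right (by omega), hieq, Nat.sub_self] at h2
      simp only [List.getElem?_cons_zero, Option.some_inj] at h2
      subst h2
      have ha : a = l.getLast hfan.nonempty := by
        rw [List.getLast_eq_getElem]
        rw [List.getElem?_eq_getElem hi] at h1
        have h1' := Option.some_inj.mp h1
        rw [← h1']
        congr 1
        omega
      exact fun e he hae hxe => hchain e he (ha ▸ hae) hxe

lemma fan_take {l : List V} (hfan : IsFan E c x y l) {n : ℕ} (hn : 0 < n) :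
    IsFan E c x y (l.take n) where
  nonempty := by
    have h0 : l.length ≠ 0 := fun h => hfan.nonempty (List.eq_nil_of_length_eq_zero h)
    intro hcon
    have := congrArg List.length hcon
    rw [List.length_take, List.length_nil] at this
    omega
  head := by
    rw [List.head?_eq_getElem?, List.getElem?_take, if_pos hn, ← List.head?_eq_getElem?]
    exact hfan.head
  nodup := (List.take_sublist n l).nodup hfan.nodup
  memE := fun z hz => hfan.memE z ((List.take_sublist n l).subset hz)
  nex := fun z hz => hfan.nex z ((List.take_sublist n l).subset hz)
  chain := by
    intro a b hab
    obtain ⟨i, h1, h2⟩ := hab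
    have hi1 : i + 1 < n := by
      by_contra hcon
      rw [List.getElem?_take, if_neg hcon] at h2
      cases h2
    rw [List.getElem?_take, if_pos (by omega)] at h1
    rw [List.getElem?_take, if_pos hi1] at h2
    exact hfan.chain a b ⟨i, h1, h2⟩

lemma getLast_take {l : List V} {n : ℕ} (hn : 0 < n) (hnl : n ≤ l.length)
    (hne : l.take n ≠ []) (hl : l ≠ []) :
    (l.take n).getLast hne = l[n - 1]'(by omega) := by
  rw [List.getLast_eq_getElem]
  have hlen : (l.take n).length = n := by
    rw [List.length_take]
    omega
  simp only [hlen]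
  rw [List.getElem_take]

lemma endgame (hE : ∀ e ∈ E, ¬ e.IsDiag)
    (hdeg : ∀ v, (E.filter (fun e => v ∈ e)).card < N)
    (hxy : s(x, y) ∈ E) (hne : x ≠ y) (hc : Proper N c (E.erase s(x, y)))
    {α : ℕ} (hαN : α < N) (hαx : Missing c (E.erase s(x, y)) x α)
    {l : List V} (hfan : IsFan E c x y l)
    (hstuck : ∀ z, z ∉ l → s(x, z) ∈ E →
      ¬(∀ e ∈ E, l.getLast hfan.nonempty ∈ e → x ∉ e → c e ≠ c s(x, z))) :
    ∃ c', Proper N c' E := by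
  classical
  set lastv := l.getLast hfan.nonempty with hlastv
  have hlastmem : lastv ∈ l := List.getLast_mem hfan.nonempty
  have hxlast : x ≠ lastv := (hfan.nex lastv hlastmem).symm
  have hlastE : s(x, lastv) ∈ E := hfan.memE lastv hlastmem
  -- choose β missing at lastv
  have hcardl : ((E.erase s(x, y)).filter (fun e => lastv ∈ e)).card < N := by
    apply lt_of_le_of_lt (Finset.card_le_card ?_) (hdeg lastv)
    intro e he
    rw [Finset.mem_filter] at he ⊢
    exact ⟨(Finset.mem_erase.mp he.1).2, he.2⟩
  obtain ⟨β, hβN, hβlast⟩ := exists_missing c _ lastv hcardl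
  -- β is missing at lastv for the rotated coloring as well
  have hmissh : Missing (rotC c x l) (E.erase s(x, lastv)) lastv β := by
    intro e he hve
    by_cases hxe : x ∈ e
    · exact absurd (eq_sxy_of_mem_mem hxe hve hxlast) (Finset.mem_erase.mp he).1
    · rw [rotC_nonx hxe]
      exact hβlast e (Finset.mem_erase.mpr
        ⟨fun hcon => hxe (hcon ▸ Sym2.mem_mk_left x y), (Finset.mem_erase.mp he).2⟩) hve
  by_cases hβx : Missing c (E.erase s(x, y)) x β
  · -- β is missing at x too: rotate fully and color s(x, lastv) with β
    exact finish hlastE (rot_proper hc hfan) hβN (rot_missing_x hfan hβx) hmissh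
  · -- β appears at x, on edge s(x, z) with z in the fan
    rw [Missing] at hβx
    push_neg at hβx
    obtain ⟨ez, hezA, hxez, hcez⟩ := hβx
    obtain ⟨z, rfl⟩ := mem_sym2_ex hxez
    have hzE : s(x, z) ∈ E := (Finset.mem_erase.mp hezA).2
    have hzy : z ≠ y := fun hcon => (Finset.mem_erase.mp hezA).1 (by rw [hcon])
    have hxz : x ≠ z := fun hcon => hE _ hzE (by rw [← hcon, Sym2.mk_isDiag_iff])
    have hzlast : z ≠ lastv := by
      intro hcon
      exact hβlast (s(x, z)) hezA (hcon ▸ Sym2.mem_mk_right x z) hcez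
    have hzl : z ∈ l := by
      by_contra hcon
      refine hstuck z hcon hzE ?_
      intro e he hlaste hxe
      rw [hcez]
      exact hβlast e (Finset.mem_erase.mpr
        ⟨fun hcon2 => hxe (hcon2 ▸ Sym2.mem_mk_left x y), he⟩) hlaste
    obtain ⟨j, hjlen, hjz⟩ := List.getElem_of_mem hzl
    have hy0 : l[0]? = some y := by
      have h := hfan.head
      rwa [List.head?_eq_getElem?] at h
    have hj0 : j ≠ 0 := by
      intro hcon
      subst hcon
      rw [List.getElem?_eq_getElem hjlen, hjz] at hy0
      exact hzy (Option.some_inj.mp hy0)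
    have hjlast : j ≠ l.length - 1 := by
      intro hcon
      apply hzlast
      subst hcon
      rw [← hjz, hlastv, List.getLast_eq_getElem]
    have hjlen1 : j < l.length - 1 := by
      have := hjlen; omega
    have hyj1len : j - 1 < l.length := by omega
    set yj1 := l[j - 1]'hyj1len with hyj1
    have hyj1mem : yj1 ∈ l := List.getElem_mem hyj1len
    have hxyj1 : x ≠ yj1 := (hfan.nex yj1 hyj1mem).symm
    have hyj1E : s(x, yj1) ∈ E := hfan.memE yj1 hyj1mem
    have hfnj : FanNext l yj1 z := by
      refine ⟨j - 1, List.getElem?_eq_getElem hyj1len, ?_⟩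
      have hj1 : j - 1 + 1 = j := by omega
      rw [hj1, List.getElem?_eq_getElem hjlen, hjz]
    have hβyj1 : ∀ e ∈ E, yj1 ∈ e → x ∉ e → c e ≠ β := by
      intro e he hve hxe
      rw [← hcez]
      exact hfan.chain yj1 z hfnj e he hve hxe
    have hαβ : α ≠ β := fun h => (hαx _ hezA hxez) (hcez.trans h.symm)
    have hyj1z : yj1 ≠ z := by
      intro hcon
      rw [hyj1, ← hjz] at hcon
      have := List.getElem?_inj (i := j - 1) (j := j) hyj1len hfan.nodup |>.mp
        (by rw [List.getElem?_eq_getElem hyj1len, List.getElem?_eq_getElem hjlen, hcon])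
      omega
    have hyj1last : yj1 ≠ lastv := by
      intro hcon
      rw [hyj1, hlastv, List.getLast_eq_getElem] at hcon
      have := List.getElem?_inj (i := j - 1) (j := l.length - 1) hyj1len hfan.nodup |>.mp
        (by rw [List.getElem?_eq_getElem hyj1len, List.getElem?_eq_getElem (by omega : l.length - 1 < l.length), hcon])
      omega
    -- the prefix fan
    have hj0' : 0 < j := by omega
    have hfm : IsFan E c x y (l.take j) := fan_take hfan hj0'
    have hml : (l.take j).getLast hfm.nonempty = yj1 :=
      getLast_take hj0' (by omega) hfm.nonempty hfan.nonempty
    have hproper_j : Proper N (rotC c x (l.take j)) (E.erase s(x, yj1)) := by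
      have h := rot_proper hc hfm
      rwa [hml] at h
    have hmissx_j : Missing (rotC c x (l.take j)) (E.erase s(x, yj1)) x α := by
      have h := rot_missing_x hfm hαx
      rwa [hml] at h
    have hmissj : Missing (rotC c x (l.take j)) (E.erase s(x, yj1)) yj1 β := by
      intro e he hve
      by_cases hxe : x ∈ e
      · exact absurd (eq_sxy_of_mem_mem hxe hve hxyj1) (Finset.mem_erase.mp he).1
      · rw [rotC_nonx hxe]
        exact hβyj1 e (Finset.mem_erase.mp he).2 hve hxe
    -- nodiag facts
    have hAh_nd : ∀ e ∈ E.erase s(x, lastv), ¬ e.IsDiag :=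
      fun e he => hE e (Finset.mem_erase.mp he).2
    have hAj_nd : ∀ e ∈ E.erase s(x, yj1), ¬ e.IsDiag :=
      fun e he => hE e (Finset.mem_erase.mp he).2
    -- the core graph: αβ-edges of the original coloring away from x
    set Acore := E.filter (fun e => x ∉ e) with hAcore
    have hAcoreA : ∀ e ∈ Acore, e ∈ E.erase s(x, y) := by
      intro e he
      rw [hAcore, Finset.mem_filter] at he
      exact Finset.mem_erase.mpr ⟨fun hcon => he.2 (hcon ▸ Sym2.mem_mk_left x y), he.1⟩
    -- unique H-neighbor of x in the fully rotated coloring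
    have Uh : ∀ u : V, (Hgraph (rotC c x l) (E.erase s(x, lastv)) α β).Adj x u → u = yj1 := by
      intro u hadj
      rw [hgraph_adj] at hadj
      obtain ⟨⟨hmem, hcol⟩, hxu⟩ := hadj
      have hulast : u ≠ lastv := fun hcon =>
        (Finset.mem_erase.mp hmem).1 (by rw [hcon])
      obtain ⟨u', hv1, hv2, hv3⟩ := rot_xedge_val hfan (Finset.mem_erase.mp hmem).2 hulast
      rw [hv1] at hcol
      rcases hcol with hcol | hcol
      · exact absurd hcol (hαx _ hv2 (Sym2.mem_mk_left x u'))
      · have huz : u' = z := by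
          by_contra hcon
          exact hc.2 x (s(x, u')) (s(x, z)) hv2 hezA (Sym2.mem_mk_left _ _)
            (Sym2.mem_mk_left _ _) (fun hcc => hcon (Sym2.congr_right.mp hcc))
            (hcol.trans hcez.symm)
        rw [huz] at hv3
        rcases hv3 with hnext | ⟨hnl, heq⟩
        · exact fanNext_inj hfan.nodup hnext hfnj
        · exact absurd (heq ▸ hzl) hnl
    -- unique H-neighbor of x in the prefix-rotated coloring
    have Uj : ∀ u : V, (Hgraph (rotC c x (l.take j)) (E.erase s(x, yj1)) α β).Adj x u → u = z := by
      intro u hadj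
      rw [hgraph_adj] at hadj
      obtain ⟨⟨hmem, hcol⟩, hxu⟩ := hadj
      have hulast : u ≠ (l.take j).getLast hfm.nonempty := fun hcon =>
        (Finset.mem_erase.mp hmem).1 (by rw [hcon, hml])
      obtain ⟨u', hv1, hv2, hv3⟩ := rot_xedge_val hfm (Finset.mem_erase.mp hmem).2 hulast
      rw [hv1] at hcol
      rcases hcol with hcol | hcol
      · exact absurd hcol (hαx _ hv2 (Sym2.mem_mk_left x u'))
      · have huz : u' = z := by
          by_contra hcon
          exact hc.2 x (s(x, u')) (s(x, z)) hv2 hezA (Sym2.mem_mk_left _ _)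
            (Sym2.mem_mk_left _ _) (fun hcc => hcon (Sym2.congr_right.mp hcc))
            (hcol.trans hcez.symm)
        rw [huz] at hv3
        rcases hv3 with hnext | ⟨hnl, heq⟩
        · exfalso
          have hzm : z ∈ l.take j := (fanNext_mem hnext).2
          obtain ⟨i', hi', hiz⟩ := List.getElem_of_mem hzm
          have hlt : i' < j := by
            have := hi'
            rw [List.length_take] at this
            omega
          rw [List.getElem_take] at hiz
          have := List.getElem?_inj (i := i') (j := j) (by omega) hfan.nodup |>.mp
            (by rw [List.getElem?_eq_getElem (by omega : i' < l.length),
              List.getElem?_eq_getElem hjlen, hiz, hjz])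
          omega
        · exact heq.symm
    -- transfer H-adjacency away from x into the core
    have hsub_h : ∀ a b : V, (Hgraph (rotC c x l) (E.erase s(x, lastv)) α β).Adj a b →
        a ≠ x → b ≠ x → (Hgraph c Acore α β).Adj a b := by
      intro a b hadj hax hbx
      rw [hgraph_adj] at hadj ⊢
      obtain ⟨⟨hmem, hcol⟩, hab⟩ := hadj
      have hxe : x ∉ s(a, b) := by
        rw [Sym2.mem_iff]
        push_neg
        exact ⟨Ne.symm hax, Ne.symm hbx⟩
      rw [rotC_nonx hxe] at hcol
      exact ⟨⟨Finset.mem_filter.mpr ⟨(Finset.mem_erase.mp hmem).2, hxe⟩, hcol⟩, hab⟩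
    have hsub_j : ∀ a b : V, (Hgraph (rotC c x (l.take j)) (E.erase s(x, yj1)) α β).Adj a b →
        a ≠ x → b ≠ x → (Hgraph c Acore α β).Adj a b := by
      intro a b hadj hax hbx
      rw [hgraph_adj] at hadj ⊢
      obtain ⟨⟨hmem, hcol⟩, hab⟩ := hadj
      have hxe : x ∉ s(a, b) := by
        rw [Sym2.mem_iff]
        push_neg
        exact ⟨Ne.symm hax, Ne.symm hbx⟩
      rw [rotC_nonx hxe] at hcol
      exact ⟨⟨Finset.mem_filter.mpr ⟨(Finset.mem_erase.mp hmem).2, hxe⟩, hcol⟩, hab⟩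
    by_cases hreach : (Hgraph (rotC c x l) (E.erase s(x, lastv)) α β).Reachable lastv x
    · -- hard case: x and lastv are joined in the αβ-graph
      have C1 : (Hgraph c Acore α β).Reachable yj1 lastv :=
        reach_avoid Uh hreach.symm hxlast hsub_h
      by_cases hreach2 :
          (Hgraph (rotC c x (l.take j)) (E.erase s(x, yj1)) α β).Reachable yj1 x
      · -- impossible: three endpoints in one path component of the core
        exfalso
        have C2 : (Hgraph c Acore α β).Reachable z yj1 :=
          reach_avoid Uj hreach2.symm hxyj1 hsub_j
        have hcols : ∀ (w3 p q : V), p ≠ q → (Hgraph c Acore α β).Adj w3 p →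
            (Hgraph c Acore α β).Adj w3 q → c s(w3, p) ≠ c s(w3, q) := by
          intro w3 p q hpq hp hq
          rw [hgraph_adj] at hp hq
          exact hc.2 w3 (s(w3, p)) (s(w3, q)) (hAcoreA _ hp.1.1) (hAcoreA _ hq.1.1)
            (Sym2.mem_mk_left _ _) (Sym2.mem_mk_left _ _)
            (fun hcc => hpq (Sym2.congr_right.mp hcc))
        have h2 : ∀ (w3 a b c3 : V), (Hgraph c Acore α β).Adj w3 a →
            (Hgraph c Acore α β).Adj w3 b → (Hgraph c Acore α β).Adj w3 c3 →
            a = b ∨ a = c3 ∨ b = c3 := by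
          intro w3 a b c3 ha hb hc3
          by_contra hcon
          push_neg at hcon
          obtain ⟨hab, hac, hbc⟩ := hcon
          have cab := hcols w3 a b hab ha hb
          have cac := hcols w3 a c3 hac ha hc3
          have cbc := hcols w3 b c3 hbc hb hc3
          have ca := ((hgraph_adj).mp ha).1.2
          have cb := ((hgraph_adj).mp hb).1.2
          have cc := ((hgraph_adj).mp hc3).1.2
          rcases ca with ca | ca <;> rcases cb with cb | cb <;> rcases cc with cc | cc <;>
            omega
        have hdeg1 : ∀ (w3 : V), (∀ e ∈ E, w3 ∈ e → x ∉ e → c e ≠ β) →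
            ∀ a b, (Hgraph c Acore α β).Adj w3 a → (Hgraph c Acore α β).Adj w3 b → a = b := by
          intro w3 hnoβ a b ha hb
          by_contra hab
          have hca := ((hgraph_adj).mp ha).1.2
          have hcb := ((hgraph_adj).mp hb).1.2
          have hmema := ((hgraph_adj).mp ha).1.1
          have hmemb := ((hgraph_adj).mp hb).1.1
          rw [hAcore, Finset.mem_filter] at hmema hmemb
          have hna := hnoβ (s(w3, a)) hmema.1 (Sym2.mem_mk_left _ _) hmema.2
          have hnb := hnoβ (s(w3, b)) hmemb.1 (Sym2.mem_mk_left _ _) hmemb.2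
          have := hcols w3 a b hab ha hb
          rcases hca with hca | hca <;> rcases hcb with hcb | hcb <;> omega
        -- lastv, yj1, z all have degree ≤ 1 in the core
        have hu1 := hdeg1 yj1 hβyj1
        have hw1 := hdeg1 lastv (fun e he hve hxe => hβlast e (Finset.mem_erase.mpr
          ⟨fun hcon => hxe (hcon ▸ Sym2.mem_mk_left x y), he⟩) hve)
        have hv1 : ∀ a b, (Hgraph c Acore α β).Adj z a → (Hgraph c Acore α β).Adj z b →
            a = b := by
          refine hdeg1 z ?_
          intro e he hve hxe
          intro hcon
          refine hc.2 z e (s(x, z)) (Finset.mem_erase.mpr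
            ⟨fun hcon2 => hxe (hcon2 ▸ Sym2.mem_mk_left x y), he⟩) hezA hve
            (Sym2.mem_mk_right x z) ?_ (hcon.trans hcez.symm)
          intro hcon2
          exact hxe (hcon2 ▸ Sym2.mem_mk_left x z)
        exact three_ends h2 hyj1z hyj1last hzlast hu1 hv1 hw1 C2.symm C1
      · -- swap the component of yj1 in the prefix-rotated coloring, then color with α
        have hproper2 := swap_proper (w₀ := yj1) hAj_nd hαβ hαN hβN hproper_j
        have hmx : Missing (swapC (rotC c x (l.take j)) (E.erase s(x, yj1)) α β yj1)
            (E.erase s(x, yj1)) x α :=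
          swap_missing_out hAj_nd (fun h => hreach2 h.symm) hmissx_j
        have hmy : Missing (swapC (rotC c x (l.take j)) (E.erase s(x, yj1)) α β yj1)
            (E.erase s(x, yj1)) yj1 α :=
          swap_missing_in hAj_nd hαβ (Reachable.refl yj1) hmissj
        exact finish hyj1E hproper2 hαN hmx hmy
    · -- easy case: swap the component of lastv in the fully rotated coloring
      have hproper2 := swap_proper (w₀ := lastv) hAh_nd hαβ hαN hβN (rot_proper hc hfan)
      have hmx : Missing (swapC (rotC c x l) (E.erase s(x, lastv)) α β lastv)
          (E.erase s(x, lastv)) x α :=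
        swap_missing_out hAh_nd (fun h => hreach h.symm) (rot_missing_x hfan hαx)
      have hmy : Missing (swapC (rotC c x l) (E.erase s(x, lastv)) α β lastv)
          (E.erase s(x, lastv)) lastv α :=
        swap_missing_in hAh_nd hαβ (Reachable.refl lastv) hmissh
      exact finish hlastE hproper2 hαN hmx hmy

lemma extend (hE : ∀ e ∈ E, ¬ e.IsDiag)
    (hdeg : ∀ v, (E.filter (fun e => v ∈ e)).card < N)
    (hxy : s(x, y) ∈ E) (hne : x ≠ y) (hc : Proper N c (E.erase s(x, y))) :
    ∃ c', Proper N c' E := by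
  classical
  have hcard : ((E.erase s(x, y)).filter (fun e => x ∈ e)).card < N := by
    apply lt_of_le_of_lt (Finset.card_le_card ?_) (hdeg x)
    intro e he
    rw [Finset.mem_filter] at he ⊢
    exact ⟨(Finset.mem_erase.mp he.1).2, he.2⟩
  obtain ⟨α, hαN, hαx⟩ := exists_missing c _ x hcard
  suffices H : ∀ (fuel : ℕ) (l : List V) (hfan : IsFan E c x y l),
      Fintype.card V ≤ fuel + l.length → ∃ c', Proper N c' E by
    refine H (Fintype.card V) [y] ?_ (by simp)
    exact { nonempty := by simp
            head := rfl
            nodup := List.nodup_singleton y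
            memE := by intro z hz; rw [List.mem_singleton] at hz; subst hz; exact hxy
            nex := by intro z hz; rw [List.mem_singleton] at hz; subst hz; exact Ne.symm hne
            chain := by intro a b hab; exact absurd hab fanNext_single }
  intro fuel
  induction fuel with
  | zero =>
    intro l hfan hlen
    by_cases hstuck : ∀ z, z ∉ l → s(x, z) ∈ E →
        ¬(∀ e ∈ E, l.getLast hfan.nonempty ∈ e → x ∉ e → c e ≠ c s(x, z))
    · exact endgame hE hdeg hxy hne hc hαN hαx hfan hstuck
    · push_neg at hstuck
      obtain ⟨z, hz1, hz2, _⟩ := hstuck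
      exfalso
      apply hz1
      have h1 : l.toFinset.card = l.length := List.toFinset_card_of_nodup hfan.nodup
      have h2 : l.length ≤ Fintype.card V := by
        rw [← h1]
        exact Finset.card_le_univ l.toFinset
      have h3 : l.toFinset = Finset.univ := by
        apply Finset.eq_univ_of_card
        omega
      rw [← List.mem_toFinset, h3]
      exact Finset.mem_univ z
  | succ n ih =>
    intro l hfan hlen
    by_cases hstuck : ∀ z, z ∉ l → s(x, z) ∈ E →
        ¬(∀ e ∈ E, l.getLast hfan.nonempty ∈ e → x ∉ e → c e ≠ c s(x, z))
    · exact endgame hE hdeg hxy hne hc hαN hαx hfan hstuck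
    · push_neg at hstuck
      obtain ⟨z, hz1, hz2, hz3⟩ := hstuck
      refine ih (l ++ [z]) (fan_append hE hfan hz1 hz2 hz3) ?_
      rw [List.length_append, List.length_singleton]
      omega

end Extend

theorem vizing : ∀ (E : Finset (Sym2 V)), (∀ e ∈ E, ¬ e.IsDiag) → ∀ (N : ℕ),
    (∀ v, (E.filter (fun e => v ∈ e)).card < N) → ∃ c, Proper N c E := by
  classical
  intro E
  induction E using Finset.strongInduction with
  | _ E ih =>
    intro hE N hdeg
    rcases eq_or_ne E ∅ with rfl | hEne
    · exact ⟨fun _ => 0, fun e he => absurd he (Finset.notMem_empty e),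
        fun v e f he => absurd he (Finset.notMem_empty e)⟩
    · obtain ⟨e₀, he₀⟩ := Finset.nonempty_iff_ne_empty.mpr hEne
      revert he₀
      induction e₀ using Sym2.ind with
      | _ x y =>
        intro he₀
        have hxyne : x ≠ y := by
          intro hcon
          exact hE _ he₀ (by rw [Sym2.mk_isDiag_iff]; exact hcon)
        have hsub : E.erase s(x, y) ⊂ E := Finset.erase_ssubset he₀
        obtain ⟨c, hc⟩ := ih (E.erase s(x, y)) hsub
          (fun e he => hE e (Finset.mem_of_mem_erase he)) N
          (fun v => lt_of_le_of_lt (Finset.card_le_card (by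
            intro e he
            rw [Finset.mem_filter] at he ⊢
            exact ⟨Finset.mem_of_mem_erase he.1, he.2⟩)) (hdeg v))
        exact extend hE hdeg he₀ hxyne hc

end Viz

section App

def circE (k : ℕ) [NeZero k] (D : Finset ℕ) : Finset (Sym2 (ZMod k)) :=
  (Finset.univ ×ˢ D).image (fun p => s(p.1, p.1 + (p.2 : ZMod k)))

variable {k : ℕ} {D : Finset ℕ}

lemma two_mul_half (hk3 : 3 ≤ k) (hk : Odd k) : 2 * ((k - 1) / 2) = k - 1 := by
  obtain ⟨m, rfl⟩ := hk; omega

lemma mem_sym2_exists {α : Type*} {e : Sym2 α} {x : α} (hx : x ∈ e) : ∃ z, e = s(x, z) := by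
  induction e using Sym2.ind with
  | _ a b =>
    rw [Sym2.mem_iff] at hx
    rcases hx with rfl | rfl
    · exact ⟨b, rfl⟩
    · exact ⟨a, Sym2.eq_swap⟩

variable [NeZero k]

lemma mem_circE {e : Sym2 (ZMod k)} :
    e ∈ circE k D ↔ ∃ (v : ZMod k) (d : ℕ), d ∈ D ∧ e = s(v, v + (d : ZMod k)) := by
  simp only [circE, Finset.mem_image, Finset.mem_product, Finset.mem_univ, true_and, Prod.exists]
  constructor
  · rintro ⟨a, b, hb, rfl⟩; exact ⟨a, b, hb, rfl⟩
  · rintro ⟨v, d, hd, rfl⟩; exact ⟨v, d, hd, rfl⟩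

lemma cast_eq_zero_iff' {a : ℕ} (ha : a < k) : (a : ZMod k) = 0 ↔ a = 0 := by
  rw [← ZMod.val_eq_zero _, ZMod.val_natCast_of_lt ha]

section withD

variable (hk3 : 3 ≤ k) (hk : Odd k) (hD : D ⊆ Finset.Icc 1 ((k - 1) / 2))
include hk3 hk hD

lemma D_bound {d : ℕ} (hd : d ∈ D) : 1 ≤ d ∧ 2 * d + 1 ≤ k := by
  have h1 := hD hd; rw [Finset.mem_Icc] at h1
  have h2 := two_mul_half hk3 hk
  omega

lemma castD_ne_zero {d : ℕ} (hd : d ∈ D) : (d : ZMod k) ≠ 0 := by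
  have hb := D_bound hk3 hk hD hd
  rw [Ne, cast_eq_zero_iff' (by omega)]; omega

lemma castD_add_ne_zero {d d' : ℕ} (hd : d ∈ D) (hd' : d' ∈ D) :
    (d : ZMod k) + (d' : ZMod k) ≠ 0 := by
  have hb := D_bound hk3 hk hD hd; have hb' := D_bound hk3 hk hD hd'
  have h : ((d : ZMod k) + (d' : ZMod k)) = ((d + d' : ℕ) : ZMod k) := by push_cast; ring
  rw [h, Ne, cast_eq_zero_iff' (by omega)]; omega

lemma castD_inj {d d' : ℕ} (hd : d ∈ D) (hd' : d' ∈ D)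
    (h : (d : ZMod k) = (d' : ZMod k)) : d = d' := by
  have hb := D_bound hk3 hk hD hd; have hb' := D_bound hk3 hk hD hd'
  have h2 := congrArg ZMod.val h
  rwa [ZMod.val_natCast_of_lt (by omega), ZMod.val_natCast_of_lt (by omega)] at h2

lemma circE_nodiag : ∀ e ∈ circE k D, ¬ e.IsDiag := by
  intro e he
  rw [mem_circE] at he
  obtain ⟨v, d, hd, rfl⟩ := he
  rw [Sym2.mk_isDiag_iff]
  intro h
  exact castD_ne_zero hk3 hk hD hd (by rwa [left_eq_add] at h)

lemma circE_filter (v : ZMod k) :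
    (circE k D).filter (fun e => v ∈ e) =
      (D.image fun d : ℕ => s(v, v + (d : ZMod k))) ∪ (D.image fun d : ℕ => s(v - (d : ZMod k), v)) := by
  ext e
  simp only [Finset.mem_filter, mem_circE, Finset.mem_union, Finset.mem_image]
  constructor
  · rintro ⟨⟨w, d, hd, rfl⟩, hv⟩
    rw [Sym2.mem_iff] at hv
    rcases hv with rfl | hv
    · exact Or.inl ⟨d, hd, rfl⟩
    · refine Or.inr ⟨d, hd, ?_⟩
      rw [hv, add_sub_cancel_right]
  · rintro (⟨d, hd, rfl⟩ | ⟨d, hd, rfl⟩)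
    · exact ⟨⟨v, d, hd, rfl⟩, by rw [Sym2.mem_iff]; left; rfl⟩
    · refine ⟨⟨v - (d : ZMod k), d, hd, by rw [sub_add_cancel]⟩, by rw [Sym2.mem_iff]; right; rfl⟩

lemma circE_inj1 (v : ZMod k) : Set.InjOn (fun d : ℕ => s(v, v + (d : ZMod k))) D := by
  intro d hd d' hd' h
  simp only [Sym2.eq_iff] at h
  rcases h with ⟨h1, h2⟩ | ⟨h1, h2⟩
  · exact castD_inj hk3 hk hD hd hd' (by linear_combination h2)
  · exact absurd (castD_ne_zero hk3 hk hD hd') (by simp [show (d' : ZMod k) = 0 by linear_combination -h1])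

lemma circE_inj2 (v : ZMod k) : Set.InjOn (fun d : ℕ => s(v - (d : ZMod k), v)) D := by
  intro d hd d' hd' h
  simp only [Sym2.eq_iff] at h
  rcases h with ⟨h1, h2⟩ | ⟨h1, h2⟩
  · exact castD_inj hk3 hk hD hd hd' (by linear_combination -h1)
  · exact absurd (castD_ne_zero hk3 hk hD hd) (by simp [show (d : ZMod k) = 0 by linear_combination -h1])

lemma circE_disj (v : ZMod k) :
    Disjoint (D.image fun d : ℕ => s(v, v + (d : ZMod k)))
      (D.image fun d : ℕ => s(v - (d : ZMod k), v)) := by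
  rw [Finset.disjoint_left]
  rintro e he hf
  rw [Finset.mem_image] at he hf
  obtain ⟨d, hd, rfl⟩ := he
  obtain ⟨d', hd', h⟩ := hf
  simp only [Sym2.eq_iff] at h
  rcases h with ⟨h1, h2⟩ | ⟨h1, h2⟩
  · exact castD_ne_zero hk3 hk hD hd (by linear_combination -h2)
  · exact castD_add_ne_zero hk3 hk hD hd hd' (by linear_combination h2 - h1)

lemma circE_deg (v : ZMod k) :
    ((circE k D).filter (fun e => v ∈ e)).card = 2 * D.card := by
  rw [circE_filter hk3 hk hD v, Finset.card_union_of_disjoint (circE_disj hk3 hk hD v),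
    Finset.card_image_of_injOn (circE_inj1 hk3 hk hD v),
    Finset.card_image_of_injOn (circE_inj2 hk3 hk hD v)]
  ring

end withD
end App

def levelsGraph (k : ℕ) (D : Finset ℕ) : SimpleGraph (ZMod k × Bool) :=
  SimpleGraph.fromRel (fun x y =>
    (x.2 = y.2 ∧ ∃ d ∈ D, x.1 - y.1 = (d : ZMod k)) ∨
    (x.1 = y.1 ∧ x.2 = false ∧ y.2 = true))

/-- For `k ≥ 3` odd and `D ⊆ {1, ..., (k-1)/2}`, the graph `⟨D, {0}, D⟩` is regular of
degree `2|D| + 1` and admits a 1-factorization: a partition of its edge set into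
`2|D| + 1` perfect matchings. -/
theorem stmt7 (k : ℕ) (hk3 : 3 ≤ k) (hk : Odd k) (D : Finset ℕ)
    (hD : D ⊆ Finset.Icc 1 ((k - 1) / 2)) :
    (∀ v, Nat.card {u | (levelsGraph k D).Adj v u} = 2 * D.card + 1) ∧
      ∃ M : Fin (2 * D.card + 1) → Set (Sym2 (ZMod k × Bool)),
        (∀ i, ∀ v : ZMod k × Bool, ∃! e, e ∈ M i ∧ v ∈ e) ∧
        (Pairwise fun i j => Disjoint (M i) (M j)) ∧
        (⋃ i, M i) = (levelsGraph k D).edgeSet := by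
  haveI : NeZero k := ⟨by omega⟩
  classical
  constructor
  · -- degree computation
    rintro ⟨x, b⟩
    have hset : {u | (levelsGraph k D).Adj (x, b) u} =
        ↑((((D.image fun d : ℕ => (x + (d : ZMod k), b)) ∪
            (D.image fun d : ℕ => (x - (d : ZMod k), b))) ∪ {((x, !b) : ZMod k × Bool)})) := by
      ext ⟨u1, u2⟩
      simp only [Set.mem_setOf_eq, Finset.coe_union, Set.mem_union, Finset.coe_image,
        Set.mem_image, Finset.mem_coe, Finset.coe_singleton, Set.mem_singleton_iff,
        Prod.mk.injEq]
      constructor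
      · intro hadj
        rw [levelsGraph, fromRel_adj] at hadj
        obtain ⟨hne, h⟩ := hadj
        dsimp only at h
        rcases h with (⟨hb2, d, hd, hdiff⟩ | ⟨h1, h2, h3⟩) | (⟨hb2, d, hd, hdiff⟩ | ⟨h1, h2, h3⟩)
        · exact Or.inl (Or.inr ⟨d, hd, by linear_combination hdiff, hb2⟩)
        · subst h1; subst h2; subst h3; exact Or.inr ⟨rfl, rfl⟩
        · exact Or.inl (Or.inl ⟨d, hd, by linear_combination -hdiff, hb2.symm⟩)
        · subst h2; subst h3; exact Or.inr ⟨h1, rfl⟩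
      · intro h
        rw [levelsGraph, fromRel_adj]
        rcases h with (⟨d, hd, h1, h2⟩ | ⟨d, hd, h1, h2⟩) | ⟨h1, h2⟩
        · subst h1; subst h2
          refine ⟨?_, Or.inr (Or.inl ⟨rfl, d, hd, by ring⟩)⟩
          intro hc
          rw [Prod.mk.injEq] at hc
          exact castD_ne_zero hk3 hk hD hd (by linear_combination -hc.1)
        · subst h1; subst h2
          refine ⟨?_, Or.inl (Or.inl ⟨rfl, d, hd, by ring⟩)⟩
          intro hc
          rw [Prod.mk.injEq] at hc
          exact castD_ne_zero hk3 hk hD hd (by linear_combination hc.1)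
        · subst h1; subst h2
          cases b
          · exact ⟨by simp, Or.inl (Or.inr ⟨rfl, rfl, rfl⟩)⟩
          · exact ⟨by simp, Or.inr (Or.inr ⟨rfl, rfl, rfl⟩)⟩
    rw [hset, Nat.card_coe_set_eq, Set.ncard_coe_finset]
    have hinjp1 : Set.InjOn (fun d : ℕ => ((x + (d : ZMod k), b) : ZMod k × Bool)) D := by
      intro d hd d' hd' h
      rw [Prod.mk.injEq] at h
      exact castD_inj hk3 hk hD hd hd' (by linear_combination h.1)
    have hinjp2 : Set.InjOn (fun d : ℕ => ((x - (d : ZMod k), b) : ZMod k × Bool)) D := by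
      intro d hd d' hd' h
      rw [Prod.mk.injEq] at h
      exact castD_inj hk3 hk hD hd hd' (by linear_combination -h.1)
    have hdisj12 : Disjoint (D.image fun d : ℕ => ((x + (d : ZMod k), b) : ZMod k × Bool))
        (D.image fun d : ℕ => ((x - (d : ZMod k), b) : ZMod k × Bool)) := by
      rw [Finset.disjoint_left]
      rintro p hp hq
      rw [Finset.mem_image] at hp hq
      obtain ⟨d, hd, rfl⟩ := hp
      obtain ⟨d', hd', h⟩ := hq
      rw [Prod.mk.injEq] at h
      exact castD_add_ne_zero hk3 hk hD hd' hd (by linear_combination -h.1)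
    have hdisj3 : Disjoint ((D.image fun d : ℕ => ((x + (d : ZMod k), b) : ZMod k × Bool)) ∪
        (D.image fun d : ℕ => ((x - (d : ZMod k), b) : ZMod k × Bool)))
        ({((x, !b) : ZMod k × Bool)} : Finset (ZMod k × Bool)) := by
      rw [Finset.disjoint_right]
      intro p hp hq
      rw [Finset.mem_singleton] at hp
      subst hp
      rw [Finset.mem_union, Finset.mem_image, Finset.mem_image] at hq
      rcases hq with ⟨d, hd, h⟩ | ⟨d, hd, h⟩ <;>
        · rw [Prod.mk.injEq] at h
          exact (Bool.self_ne_not b) h.2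
    rw [Finset.card_union_of_disjoint hdisj3, Finset.card_union_of_disjoint hdisj12,
      Finset.card_image_of_injOn hinjp1, Finset.card_image_of_injOn hinjp2,
      Finset.card_singleton]
    ring
  · -- the 1-factorization
    set N := 2 * D.card + 1 with hN
    obtain ⟨c, hcN, hcP⟩ := Viz.vizing (circE k D) (circE_nodiag hk3 hk hD) N
      (fun v => by rw [circE_deg hk3 hk hD]; omega)
    set A := circE k D with hA
    -- missing color apparatus
    have husedcard : ∀ v : ZMod k, ((A.filter (fun e => v ∈ e)).image c).card = 2 * D.card := by
      intro v
      rw [Finset.card_image_of_injOn, circE_deg hk3 hk hD]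
      intro e he f hf hef
      by_contra hne
      exact hcP v e f (Finset.mem_filter.mp he).1 (Finset.mem_filter.mp hf).1
        (Finset.mem_filter.mp he).2 (Finset.mem_filter.mp hf).2 hne hef
    have hused_sub : ∀ v : ZMod k, ((A.filter (fun e => v ∈ e)).image c) ⊆ Finset.range N := by
      intro v γ hγ
      rw [Finset.mem_image] at hγ
      obtain ⟨e, he, rfl⟩ := hγ
      exact Finset.mem_range.mpr (hcN e (Finset.mem_filter.mp he).1)
    have hmiss : ∀ v : ZMod k, ∃ γ, (Finset.range N \ (A.filter (fun e => v ∈ e)).image c) = {γ} := by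
      intro v
      refine Finset.card_eq_one.mp ?_
      rw [Finset.card_sdiff_of_subset (hused_sub v), Finset.card_range, husedcard]
      omega
    choose φ hφ using hmiss
    have hφmem : ∀ v, φ v ∈ Finset.range N \ (A.filter (fun e => v ∈ e)).image c := by
      intro v; rw [hφ v]; exact Finset.mem_singleton_self _
    have hφN : ∀ v, φ v < N := fun v => Finset.mem_range.mp (Finset.mem_sdiff.mp (hφmem v)).1
    have hφnot : ∀ v, φ v ∉ (A.filter (fun e => v ∈ e)).image c :=
      fun v => (Finset.mem_sdiff.mp (hφmem v)).2
    have hφuniq : ∀ v γ, γ < N → γ ∉ (A.filter (fun e => v ∈ e)).image c → γ = φ v := by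
      intro v γ h1 h2
      have : γ ∈ Finset.range N \ (A.filter (fun e => v ∈ e)).image c :=
        Finset.mem_sdiff.mpr ⟨Finset.mem_range.mpr h1, h2⟩
      rw [hφ v] at this
      exact Finset.mem_singleton.mp this
    -- the matchings
    refine ⟨fun i =>
      {e | ∃ (u w : ZMod k) (b : Bool), e = s((u, b), (w, b)) ∧ s(u, w) ∈ A ∧ c s(u, w) = i.val}
      ∪ {e | ∃ u : ZMod k, e = s((u, false), (u, true)) ∧ φ u = i.val}, ?_, ?_, ?_⟩
    · -- perfect matching property
      rintro i ⟨x, b⟩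
      by_cases hxb : φ x = i.val
      · refine ⟨s((x, false), (x, true)), ⟨Or.inr ⟨x, rfl, hxb⟩, ?_⟩, ?_⟩
        · rw [Sym2.mem_iff]; cases b
          · exact Or.inl rfl
          · exact Or.inr rfl
        · rintro e' ⟨he', hve'⟩
          rcases he' with ⟨u, w, b', rfl, hAe, hcol⟩ | ⟨u, rfl, hu⟩
          · exfalso
            simp only [Sym2.mem_iff, Prod.mk.injEq] at hve'
            have hxuw : x ∈ s(u, w) := by
              rw [Sym2.mem_iff]
              rcases hve' with ⟨h1, h2⟩ | ⟨h1, h2⟩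
              · exact Or.inl h1
              · exact Or.inr h1
            apply hφnot x
            rw [Finset.mem_image]
            exact ⟨s(u, w), Finset.mem_filter.mpr ⟨hAe, hxuw⟩, hcol.trans hxb.symm⟩
          · simp only [Sym2.mem_iff, Prod.mk.injEq] at hve'
            rcases hve' with ⟨h1, h2⟩ | ⟨h1, h2⟩ <;> rw [h1]
      · -- color i is used at x
        have hiused : i.val ∈ (A.filter (fun e => x ∈ e)).image c := by
          by_contra hcon
          exact hxb (hφuniq x i.val i.isLt hcon).symm
        rw [Finset.mem_image] at hiused
        obtain ⟨e₀, he₀, hce₀⟩ := hiused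
        obtain ⟨he₀A, hxe₀⟩ := Finset.mem_filter.mp he₀
        obtain ⟨z, rfl⟩ := mem_sym2_exists hxe₀
        refine ⟨s((x, b), (z, b)), ⟨Or.inl ⟨x, z, b, rfl, he₀A, hce₀⟩, ?_⟩, ?_⟩
        · rw [Sym2.mem_iff]; exact Or.inl rfl
        · rintro e' ⟨he', hve'⟩
          rcases he' with ⟨u, w, b', rfl, hAe, hcol⟩ | ⟨u, rfl, hu⟩
          · simp only [Sym2.mem_iff, Prod.mk.injEq] at hve'
            have hb' : b' = b := by
              rcases hve' with ⟨h1, h2⟩ | ⟨h1, h2⟩ <;> exact h2.symm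
            subst hb'
            have hxuw : x ∈ s(u, w) := by
              rw [Sym2.mem_iff]
              rcases hve' with ⟨h1, h2⟩ | ⟨h1, h2⟩
              · exact Or.inl h1
              · exact Or.inr h1
            have heq : s(u, w) = s(x, z) := by
              by_contra hne
              exact hcP x (s(u, w)) (s(x, z)) hAe he₀A hxuw (Sym2.mem_mk_left x z) hne
                (hcol.trans hce₀.symm)
            rw [Sym2.eq_iff] at heq
            rcases heq with ⟨h1, h2⟩ | ⟨h1, h2⟩
            · rw [h1, h2]
            · rw [h1, h2]; exact Sym2.eq_swap
          · exfalso
            simp only [Sym2.mem_iff, Prod.mk.injEq] at hve'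
            rcases hve' with ⟨h1, h2⟩ | ⟨h1, h2⟩ <;> exact hxb (h1 ▸ hu)
    · -- pairwise disjoint
      intro i j hij
      rw [Set.disjoint_left]
      rintro e (⟨u, w, b, rfl, hAe, hcol⟩ | ⟨u, rfl, hu⟩) he2
      · rcases he2 with ⟨u', w', b', heq, hAe', hcol'⟩ | ⟨u', heq, hu'⟩
        · have : s(u, w) = s(u', w') := by
            simp only [Sym2.eq_iff, Prod.mk.injEq] at heq
            rw [Sym2.eq_iff]
            rcases heq with ⟨⟨h1, h2⟩, ⟨h3, h4⟩⟩ | ⟨⟨h1, h2⟩, ⟨h3, h4⟩⟩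
            · exact Or.inl ⟨h1, h3⟩
            · exact Or.inr ⟨h1, h3⟩
          apply hij
          apply Fin.val_injective
          rw [← hcol, this, hcol']
        · exfalso
          simp only [Sym2.eq_iff, Prod.mk.injEq] at heq
          rcases heq with ⟨⟨h1, h2⟩, ⟨h3, h4⟩⟩ | ⟨⟨h1, h2⟩, ⟨h3, h4⟩⟩ <;>
            · rw [h2] at h4; simp at h4
      · rcases he2 with ⟨u', w', b', heq, hAe', hcol'⟩ | ⟨u', heq, hu'⟩
        · exfalso
          simp only [Sym2.eq_iff, Prod.mk.injEq] at heq
          rcases heq with ⟨⟨h1, h2⟩, ⟨h3, h4⟩⟩ | ⟨⟨h1, h2⟩, ⟨h3, h4⟩⟩ <;>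
            · rw [← h2] at h4; simp at h4
        · have huu : u = u' := by
            simp only [Sym2.eq_iff, Prod.mk.injEq] at heq
            rcases heq with ⟨⟨h1, h2⟩, ⟨h3, h4⟩⟩ | ⟨⟨h1, h2⟩, ⟨h3, h4⟩⟩
            · exact h1
            · simp at h2
          apply hij
          apply Fin.val_injective
          rw [← hu, huu, hu']
    · -- union is the edge set
      ext e
      simp only [Set.mem_iUnion]
      constructor
      · rintro ⟨i, ⟨u, w, b, rfl, hAe, hcol⟩ | ⟨u, rfl, hu⟩⟩
        · rw [mem_edgeSet, levelsGraph, fromRel_adj]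
          rw [hA, mem_circE] at hAe
          obtain ⟨a, d, hd, heq⟩ := hAe
          rw [Sym2.eq_iff] at heq
          refine ⟨?_, ?_⟩
          · intro hc
            rw [Prod.mk.injEq] at hc
            have : u = w := hc.1
            rcases heq with ⟨h1, h2⟩ | ⟨h1, h2⟩
            · exact castD_ne_zero hk3 hk hD hd (by
                subst h1; rw [← this] at h2; linear_combination -h2)
            · exact castD_ne_zero hk3 hk hD hd (by
                subst h2; rw [this] at h1; linear_combination -h1)
          · rcases heq with ⟨h1, h2⟩ | ⟨h1, h2⟩
            · exact Or.inr (Or.inl ⟨rfl, d, hd, by rw [h1, h2]; ring⟩)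
            · exact Or.inl (Or.inl ⟨rfl, d, hd, by rw [h1, h2]; ring⟩)
        · rw [mem_edgeSet, levelsGraph, fromRel_adj]
          exact ⟨by simp, Or.inl (Or.inr ⟨rfl, rfl, rfl⟩)⟩
      · intro he
        induction e using Sym2.ind with
        | _ p q =>
          rw [mem_edgeSet, levelsGraph, fromRel_adj] at he
          obtain ⟨hne, h⟩ := he
          rcases h with (⟨hb2, d, hd, hdiff⟩ | ⟨h1, h2, h3⟩) | (⟨hb2, d, hd, hdiff⟩ | ⟨h1, h2, h3⟩)
          · have hAe : s(p.1, q.1) ∈ A := by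
              rw [hA, mem_circE]
              exact ⟨q.1, d, hd, by rw [show p.1 = q.1 + (d : ZMod k) by linear_combination hdiff]; exact Sym2.eq_swap⟩
            refine ⟨⟨c s(p.1, q.1), hcN _ hAe⟩, Or.inl ⟨p.1, q.1, p.2, ?_, hAe, rfl⟩⟩
            have : q = (q.1, p.2) := by
              rw [Prod.mk.injEq]; exact ⟨rfl, hb2.symm⟩
            rw [← this]
          · refine ⟨⟨φ p.1, hφN p.1⟩, Or.inr ⟨p.1, ?_, rfl⟩⟩
            have hp : p = (p.1, false) := by rw [Prod.mk.injEq]; exact ⟨rfl, h2⟩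
            have hq : q = (p.1, true) := by rw [Prod.mk.injEq]; exact ⟨h1.symm, h3⟩
            rw [← hp, ← hq]
          · have hAe : s(p.1, q.1) ∈ A := by
              rw [hA, mem_circE]
              exact ⟨p.1, d, hd, by rw [show q.1 = p.1 + (d : ZMod k) by linear_combination hdiff]⟩
            refine ⟨⟨c s(p.1, q.1), hcN _ hAe⟩, Or.inl ⟨p.1, q.1, p.2, ?_, hAe, rfl⟩⟩
            have : q = (q.1, p.2) := by
              rw [Prod.mk.injEq]; exact ⟨rfl, hb2⟩
            rw [← this]
          · refine ⟨⟨φ p.1, hφN p.1⟩, Or.inr ⟨p.1, ?_, rfl⟩⟩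
            have hp : p = (p.1, true) := by rw [Prod.mk.injEq]; exact ⟨rfl, h3⟩
            have hq : q = (p.1, false) := by rw [Prod.mk.injEq]; exact ⟨h1, h2⟩
            rw [hp, hq, Sym2.eq_swap]
end

section
/- Let k ≥ 3 be odd with ℓ = (k-1)/2 odd, and let Γ be a perfect matching (1-factor) of K_{2k}. Then the graph Γ + ℓ (obtained by adding ℓ new vertices adjacent to all 2k vertices of Γ) decomposes into k cycles of length k, each containing exactly one edge of Γ. -/
open SimpleGraph

/-- The graph `H + W`: `H` together with the new vertices of `W`, each adjacent to
every vertex of `H`'s (whole) vertex type. -/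
def plusW {V : Type*} (H : SimpleGraph V) (W : Type*) : SimpleGraph (V ⊕ W) :=
  SimpleGraph.fromRel (fun x y =>
    (∃ u v, x = Sum.inl u ∧ y = Sum.inl v ∧ H.Adj u v) ∨
    (∃ u j, x = Sum.inl u ∧ y = Sum.inr j))

/-- A graph `H` is a cycle of length `k`. -/
def IsCycleGraphOn {V : Type*} (k : ℕ) (H : SimpleGraph V) : Prop :=
  ∃ c : ZMod k → V, Function.Injective c ∧
    H.edgeSet = {e | ∃ i : ZMod k, e = s(c i, c (i + 1))}

/-!
Label the edges of the matching as `P (i, 0) P (i, 1)` with `i : ZMod k`, `k = 2ℓ + 1`, and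
call the added vertices `w_0, …, w_{ℓ-1}`. The `i`-th cycle is `v_0 w_0 v_1 w_1 … w_{ℓ-1} v_ℓ v_0`
with `v_t = P (i + e_t, t % 2)`, where `e_t = t / 2` for even `t` and `e_t = (ℓ - t) / 2` for odd
`t`. As `ℓ` is odd, `v_ℓ = P (i, 1)`, so the closing edge `v_ℓ v_0` is the `i`-th matching edge.
The two neighbours of `w_j` lie in different classes `P (·, 0)`, `P (·, 1)` at offsets independent
of `i`, so as `i` runs over `ZMod k` the edges at `w_j` reach every vertex of `Γ` exactly once:
the `k` cycles partition the edges of `Γ + ℓ`.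
-/

open Finset

namespace SimpleGraph

variable {V : Type*} {G : SimpleGraph V}

lemma eq_of_mem_edgeSet_of_existsUnique_adj (hG : ∀ v, ∃! u, G.Adj v u) {v : V} {e e' : Sym2 V}
    (he : e ∈ G.edgeSet) (he' : e' ∈ G.edgeSet) (hv : v ∈ e) (hv' : v ∈ e') : e = e' := by
  obtain ⟨u, rfl⟩ := Sym2.mem_iff_exists.mp hv
  obtain ⟨u', rfl⟩ := Sym2.mem_iff_exists.mp hv'
  rw [(hG v).unique (G.mem_edgeSet.mp he) (G.mem_edgeSet.mp he')]

lemma two_mul_card_edgeFinset_of_existsUnique_adj [Fintype V] [DecidableRel G.Adj]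
    (hG : ∀ v, ∃! u, G.Adj v u) : 2 * #G.edgeFinset = Fintype.card V := by
  simp [← sum_degrees_eq_twice_card_edges, degree_eq_one_iff_existsUnique_adj.mpr (hG _)]

theorem exists_equiv_edgeSet_eq_range_of_existsUnique_adj [Fintype V] {k : ℕ} [NeZero k]
    (hV : Fintype.card V = 2 * k) (hG : ∀ v, ∃! u, G.Adj v u) :
    ∃ P : ZMod k × Fin 2 ≃ V, G.edgeSet = Set.range fun i => s(P (i, 0), P (i, 1)) := by
  classical
  have hcard : Fintype.card (ZMod k) = Fintype.card G.edgeSet := by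
    have := two_mul_card_edgeFinset_of_existsUnique_adj hG
    rw [ZMod.card, card_edgeSet]
    omega
  set E := Fintype.equivOfCardEq hcard
  choose a b hab using fun i => Sym2.exists.mp ⟨_, (rfl : (E i : Sym2 V) = E i)⟩
  have hadj (i : ZMod k) : G.Adj (a i) (b i) := by simpa [hab] using (E i).2
  let P : ZMod k × Fin 2 → V := fun x => if x.2 = 0 then a x.1 else b x.1
  have hmem (x : ZMod k × Fin 2) : P x ∈ (E x.1 : Sym2 V) := by
    by_cases hx : x.2 = 0 <;> simp [P, hab, hx]
  have hinj : P.Injective := by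
    rintro ⟨i, α⟩ ⟨j, β⟩ h
    obtain rfl : i = j := E.injective <| Subtype.ext <|
      eq_of_mem_edgeSet_of_existsUnique_adj hG (E i).2 (E j).2 (hmem (i, α)) (h ▸ hmem (j, β))
    have := (hadj i).ne
    fin_cases α <;> fin_cases β <;> simp_all [P]
  have hsurj : P.Surjective := by
    intro v
    obtain ⟨u, hvu, -⟩ := hG v
    obtain ⟨i, hi⟩ := E.surjective ⟨s(v, u), hvu⟩
    have hv : v ∈ s(a i, b i) := by rw [← hab, hi]; exact Sym2.mem_mk_left v u
    rcases Sym2.mem_iff.mp hv with rfl | rfl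
    exacts [⟨(i, 0), rfl⟩, ⟨(i, 1), rfl⟩]
  refine ⟨Equiv.ofBijective P ⟨hinj, hsurj⟩, Set.ext fun e => ⟨fun he => ?_, ?_⟩⟩
  · refine ⟨E.symm ⟨e, he⟩, ?_⟩
    change s(a _, b _) = e
    rw [← hab, Equiv.apply_symm_apply]
  · rintro ⟨i, rfl⟩
    exact hadj i

end SimpleGraph

lemma edgeSet_plusW {V : Type*} (H : SimpleGraph V) (W : Type*) :
    (plusW H W).edgeSet = (H.map (⟨Sum.inl, Sum.inl_injective⟩ : V ↪ V ⊕ W)).edgeSet ∪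
      Set.range fun p : V × W => s(Sum.inl p.1, Sum.inr p.2) := by
  change _ = (H.map Function.Embedding.inl).edgeSet ∪ _
  ext e
  induction e using Sym2.ind with
  | h x y =>
    rcases x with u | j <;> rcases y with v | j' <;> simp [plusW, H.adj_comm]
    exact H.ne_of_adj

section CycleEdges

variable {W : Type*} {n : ℕ}

def cycleEdges (c : ZMod n → W) : Set (Sym2 W) := {e | ∃ x, e = s(c x, c (x + 1))}

lemma edgeSet_fromEdgeSet_cycleEdges [Nontrivial (ZMod n)] {c : ZMod n → W} (hc : c.Injective) :
    (fromEdgeSet (cycleEdges c)).edgeSet = cycleEdges c := by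
  rw [edgeSet_fromEdgeSet, sdiff_eq_left, Set.disjoint_left]
  rintro _ ⟨x, rfl⟩ hx
  exact succ_ne_self x (hc (Sym2.mk_isDiag_iff.mp hx)).symm

lemma isCycleGraphOn_fromEdgeSet_cycleEdges [Nontrivial (ZMod n)] {c : ZMod n → W}
    (hc : c.Injective) : IsCycleGraphOn n (fromEdgeSet (cycleEdges c)) :=
  ⟨c, hc, edgeSet_fromEdgeSet_cycleEdges hc⟩

end CycleEdges

namespace CycleDecomposition

variable {V : Type*} {ℓ : ℕ} (P : ZMod (2 * ℓ + 1) × Fin 2 → V)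

def pathOffset (ℓ t : ℕ) : ℕ := if t % 2 = 0 then t / 2 else (ℓ - t) / 2

def pathVertex (i : ZMod (2 * ℓ + 1)) (t : ℕ) : V :=
  P (i + pathOffset ℓ t, ⟨t % 2, Nat.mod_lt t two_pos⟩)

def cycleVertex (i : ZMod (2 * ℓ + 1)) (t : ℕ) : V ⊕ Fin ℓ :=
  if h : t % 2 = 1 ∧ t / 2 < ℓ then .inr ⟨t / 2, h.2⟩ else .inl (pathVertex P i (t / 2))

def cycle (i : ZMod (2 * ℓ + 1)) (x : ZMod (2 * ℓ + 1)) : V ⊕ Fin ℓ := cycleVertex P i x.val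

variable {P}

lemma pathVertex_zero (i : ZMod (2 * ℓ + 1)) : pathVertex P i 0 = P (i, 0) := by
  simp [pathVertex, pathOffset]

lemma pathVertex_self (hℓ : Odd ℓ) (i : ZMod (2 * ℓ + 1)) :
    pathVertex P i ℓ = P (i, 1) := by
  have h := Nat.odd_iff.mp hℓ
  simp [pathVertex, pathOffset, h]

lemma pathVertex_eq_pathVertex (hP : P.Injective) {i i' : ZMod (2 * ℓ + 1)} {t t' : ℕ}
    (h : pathVertex P i t = pathVertex P i' t') :
    i + pathOffset ℓ t = i' + pathOffset ℓ t' ∧ t % 2 = t' % 2 := by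
  simpa only [Prod.mk.injEq, Fin.mk.injEq] using hP h

lemma pathVertex_injOn (hP : P.Injective) (i : ZMod (2 * ℓ + 1)) :
    Set.InjOn (pathVertex P i) (Set.Iic ℓ) := by
  intro t ht t' ht' h
  obtain ⟨hoff, hpar⟩ := pathVertex_eq_pathVertex hP h
  have hlt (s : ℕ) (hs : s ≤ ℓ) : pathOffset ℓ s < 2 * ℓ + 1 := by
    unfold pathOffset; split_ifs <;> omega
  have := congrArg ZMod.val (add_left_cancel hoff)
  rw [ZMod.val_natCast_of_lt (hlt t ht), ZMod.val_natCast_of_lt (hlt t' ht')] at this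
  simp only [Set.mem_Iic] at ht ht'
  unfold pathOffset at this
  split_ifs at this <;> omega

lemma cycleVertex_injOn (hP : P.Injective) (i : ZMod (2 * ℓ + 1)) :
    Set.InjOn (cycleVertex P i) (Set.Iio (2 * ℓ + 1)) := by
  intro t ht t' ht' h
  simp only [Set.mem_Iio] at ht ht'
  unfold cycleVertex at h
  split_ifs at h
  · have := Fin.mk.inj_iff.mp (Sum.inr_injective h); omega
  · have := pathVertex_injOn hP i (by simp; omega) (by simp; omega) (Sum.inl_injective h)
    omega

lemma cycle_injective (hP : P.Injective) (i : ZMod (2 * ℓ + 1)) : (cycle P i).Injective :=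
  fun x y h => ZMod.val_injective _ <| cycleVertex_injOn hP i (ZMod.val_lt x) (ZMod.val_lt y) h

lemma cycle_natCast_two_mul {j : ℕ} (hj : j ≤ ℓ) (i : ZMod (2 * ℓ + 1)) :
    cycle P i (2 * j : ℕ) = .inl (pathVertex P i j) := by
  rw [cycle, ZMod.val_natCast_of_lt (by omega), cycleVertex, dif_neg (by omega)]
  congr 2; omega

lemma cycle_natCast_two_mul_add_one {j : ℕ} (hj : j < ℓ) (i : ZMod (2 * ℓ + 1)) :
    cycle P i (2 * j + 1 : ℕ) = .inr ⟨j, hj⟩ := by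
  rw [cycle, ZMod.val_natCast_of_lt (by omega), cycleVertex, dif_pos (by omega)]
  congr 2; omega

lemma mem_cycleEdges_cycle (hℓ : Odd ℓ) {i : ZMod (2 * ℓ + 1)} {e : Sym2 (V ⊕ Fin ℓ)} :
    e ∈ cycleEdges (cycle P i) ↔ e = s(.inl (P (i, 0)), .inl (P (i, 1))) ∨
      ∃ (j : Fin ℓ) (t : ℕ), (t = j ∨ t = j + 1) ∧
        e = s(.inl (pathVertex P i t), .inr j) := by
  have hwrap : ((2 * ℓ : ℕ) : ZMod (2 * ℓ + 1)) + 1 = ((2 * 0 : ℕ) : ZMod (2 * ℓ + 1)) := by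
    rw [← Nat.cast_add_one, ZMod.natCast_self, mul_zero, Nat.cast_zero]
  constructor
  · rintro ⟨x, rfl⟩
    rw [← ZMod.natCast_zmod_val x]
    obtain ⟨j, hj | hj⟩ := Nat.even_or_odd' x.val <;> have hx := ZMod.val_lt x
    · rcases (show j < ℓ ∨ j = ℓ by omega) with hjℓ | rfl
      · right
        refine ⟨⟨j, hjℓ⟩, j, Or.inl rfl, ?_⟩
        rw [hj, ← Nat.cast_add_one, cycle_natCast_two_mul hjℓ.le,
          cycle_natCast_two_mul_add_one hjℓ]
      · left
        rw [hj, hwrap, cycle_natCast_two_mul le_rfl, cycle_natCast_two_mul (Nat.zero_le _),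
          pathVertex_self hℓ, pathVertex_zero, Sym2.eq_swap]
    · right
      refine ⟨⟨j, by omega⟩, j + 1, Or.inr rfl, ?_⟩
      rw [hj, ← Nat.cast_add_one, show 2 * j + 1 + 1 = 2 * (j + 1) by ring,
        cycle_natCast_two_mul_add_one (by omega), cycle_natCast_two_mul (by omega), Sym2.eq_swap]
  · rintro (rfl | ⟨j, t, rfl | rfl, rfl⟩)
    · refine ⟨(2 * ℓ : ℕ), ?_⟩
      rw [hwrap, cycle_natCast_two_mul le_rfl, cycle_natCast_two_mul (Nat.zero_le _),
          pathVertex_self hℓ, pathVertex_zero, Sym2.eq_swap]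
    · refine ⟨(2 * j : ℕ), ?_⟩
      rw [← Nat.cast_add_one, cycle_natCast_two_mul j.2.le, cycle_natCast_two_mul_add_one j.2]
    · refine ⟨(2 * j + 1 : ℕ), ?_⟩
      rw [← Nat.cast_add_one, show 2 * (j : ℕ) + 1 + 1 = 2 * (j + 1) by ring,
        cycle_natCast_two_mul_add_one j.2, cycle_natCast_two_mul j.2, Sym2.eq_swap]

lemma eq_of_pathVertex_eq_pathVertex (hP : P.Injective) {i i' : ZMod (2 * ℓ + 1)} {j t t' : ℕ}
    (ht : t = j ∨ t = j + 1) (ht' : t' = j ∨ t' = j + 1)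
    (h : pathVertex P i t = pathVertex P i' t') : i = i' := by
  obtain ⟨hoff, hpar⟩ := pathVertex_eq_pathVertex hP h
  obtain rfl : t = t' := by omega
  exact add_right_cancel hoff

lemma disjoint_cycleEdges_cycle (hℓ : Odd ℓ) (hP : P.Injective) {i i' : ZMod (2 * ℓ + 1)}
    (hii' : i ≠ i') : Disjoint (cycleEdges (cycle P i)) (cycleEdges (cycle P i')) := by
  rw [Set.disjoint_left]
  intro e he he'
  rw [mem_cycleEdges_cycle hℓ] at he he'
  rcases he with rfl | ⟨j, t, ht, rfl⟩ <;> rcases he' with he' | ⟨j', t', ht', he'⟩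
  · rcases Sym2.eq_iff.mp he' with ⟨h, -⟩ | ⟨h, -⟩
    · exact hii' (congrArg Prod.fst (hP (Sum.inl_injective h)))
    · exact absurd (congrArg Prod.snd (hP (Sum.inl_injective h))) Fin.zero_ne_one
  · simp at he'
  · simp at he'
  · rcases Sym2.eq_iff.mp he' with ⟨h, hj⟩ | ⟨h, -⟩
    · obtain rfl := Sum.inr_injective hj
      exact hii' (eq_of_pathVertex_eq_pathVertex hP ht ht' (Sum.inl_injective h))
    · simp at h

lemma exists_pathVertex_eq (hP : P.Surjective) (v : V) (j : ℕ) :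
    ∃ i t, (t = j ∨ t = j + 1) ∧ pathVertex P i t = v := by
  obtain ⟨⟨m, a⟩, rfl⟩ := hP v
  refine ⟨m - pathOffset ℓ (j + (j + a) % 2), j + (j + a) % 2, by omega, ?_⟩
  rw [pathVertex, sub_add_cancel]
  congr
  omega

lemma edgeSet_map_inl_eq_range {Γ : SimpleGraph V}
    (hΓ : Γ.edgeSet = Set.range fun i => s(P (i, 0), P (i, 1))) :
    (Γ.map (⟨Sum.inl, Sum.inl_injective⟩ : V ↪ V ⊕ Fin ℓ)).edgeSet =
      Set.range fun i => s(.inl (P (i, 0)), .inl (P (i, 1))) := by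
  rw [edgeSet_map, hΓ, ← Set.range_comp]
  rfl

lemma iUnion_cycleEdges_cycle (hℓ : Odd ℓ) (hP : P.Surjective) {Γ : SimpleGraph V}
    (hΓ : Γ.edgeSet = Set.range fun i => s(P (i, 0), P (i, 1))) :
    ⋃ i, cycleEdges (cycle P i) = (plusW Γ (Fin ℓ)).edgeSet := by
  ext e
  simp only [Set.mem_iUnion, mem_cycleEdges_cycle hℓ, edgeSet_plusW, edgeSet_map_inl_eq_range hΓ,
    Set.mem_union, Set.mem_range]
  constructor
  · rintro ⟨i, rfl | ⟨j, t, -, rfl⟩⟩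
    exacts [Or.inl ⟨i, rfl⟩, Or.inr ⟨(pathVertex P i t, j), rfl⟩]
  · rintro (⟨i, rfl⟩ | ⟨⟨v, j⟩, rfl⟩)
    · exact ⟨i, Or.inl rfl⟩
    · obtain ⟨i, t, ht, rfl⟩ := exists_pathVertex_eq hP v j
      exact ⟨i, Or.inr ⟨j, t, ht, rfl⟩⟩

lemma existsUnique_mem_cycleEdges_cycle_map_inl (hℓ : Odd ℓ) {Γ : SimpleGraph V}
    (hΓ : Γ.edgeSet = Set.range fun i => s(P (i, 0), P (i, 1))) (i : ZMod (2 * ℓ + 1)) :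
    ∃! e, e ∈ cycleEdges (cycle P i) ∧
      e ∈ (Γ.map (⟨Sum.inl, Sum.inl_injective⟩ : V ↪ V ⊕ Fin ℓ)).edgeSet := by
  simp only [edgeSet_map_inl_eq_range hΓ]
  refine ⟨_, ⟨(mem_cycleEdges_cycle hℓ).mpr (Or.inl rfl), i, rfl⟩, ?_⟩
  rintro e ⟨he, i', rfl⟩
  rcases (mem_cycleEdges_cycle hℓ).mp he with h | ⟨j, t, -, h⟩
  · exact h
  · simp at h

theorem exists_cycle_decomposition (hℓ : Odd ℓ) (Γ : SimpleGraph V)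
    (P : ZMod (2 * ℓ + 1) × Fin 2 ≃ V)
    (hΓ : Γ.edgeSet = Set.range fun i => s(P (i, 0), P (i, 1))) :
    ∃ C : ZMod (2 * ℓ + 1) → SimpleGraph (V ⊕ Fin ℓ),
      (∀ i, IsCycleGraphOn (2 * ℓ + 1) (C i)) ∧
      (Pairwise fun i j => Disjoint (C i).edgeSet (C j).edgeSet) ∧
      (⋃ i, (C i).edgeSet) = (plusW Γ (Fin ℓ)).edgeSet ∧
      (∀ i, ∃! e, e ∈ (C i).edgeSet ∧
        e ∈ (Γ.map (⟨Sum.inl, Sum.inl_injective⟩ : V ↪ V ⊕ Fin ℓ)).edgeSet) := by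
  have : Fact (1 < 2 * ℓ + 1) := ⟨by have := hℓ.pos; omega⟩
  have hC (i) := edgeSet_fromEdgeSet_cycleEdges (cycle_injective P.injective i)
  refine ⟨fun i => fromEdgeSet (cycleEdges (cycle P i)),
    fun i => isCycleGraphOn_fromEdgeSet_cycleEdges (cycle_injective P.injective i),
    fun i i' h => ?_, ?_, fun i => ?_⟩
  · simpa only [hC] using disjoint_cycleEdges_cycle hℓ P.injective h
  · simpa only [hC] using iUnion_cycleEdges_cycle hℓ P.surjective hΓ
  · simpa only [hC] using existsUnique_mem_cycleEdges_cycle_map_inl hℓ hΓ i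

end CycleDecomposition

theorem stmt8_general (k : ℕ) (hk : Odd k) (hl : Odd ((k - 1) / 2))
    (Γ : SimpleGraph (Fin (2 * k))) (hΓ : ∀ v, ∃! u, Γ.Adj v u) :
    ∃ C : Fin k → SimpleGraph (Fin (2 * k) ⊕ Fin ((k - 1) / 2)),
      (∀ i, IsCycleGraphOn k (C i)) ∧
      (Pairwise fun i j => Disjoint (C i).edgeSet (C j).edgeSet) ∧
      (⋃ i, (C i).edgeSet) = (plusW Γ (Fin ((k - 1) / 2))).edgeSet ∧
      (∀ i, ∃! e, e ∈ (C i).edgeSet ∧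
        e ∈ (Γ.map (⟨Sum.inl, Sum.inl_injective⟩ : Fin (2 * k) ↪ Fin (2 * k) ⊕ Fin ((k - 1) / 2))).edgeSet) := by
  obtain ⟨ℓ, rfl⟩ := hk
  obtain ⟨P, hP⟩ :=
    Γ.exists_equiv_edgeSet_eq_range_of_existsUnique_adj (Fintype.card_fin _) hΓ
  rw [show (2 * ℓ + 1 - 1) / 2 = ℓ by omega] at hl ⊢
  -- `ZMod (2 * ℓ + 1)` is definitionally `Fin (2 * ℓ + 1)`.
  exact CycleDecomposition.exists_cycle_decomposition hl Γ P hP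

/-- Let `k ≥ 3` be odd with `ℓ = (k-1)/2` odd, and let `Γ` be a perfect matching of
`K_{2k}`. Then `Γ + ℓ` decomposes into `k` cycles of length `k`, each containing exactly
one edge of `Γ`. -/
theorem stmt8 (k : ℕ) (hk3 : 3 ≤ k) (hk : Odd k) (hl : Odd ((k - 1) / 2))
    (Γ : SimpleGraph (Fin (2 * k))) (hΓ : ∀ v, ∃! u, Γ.Adj v u) :
    ∃ C : Fin k → SimpleGraph (Fin (2 * k) ⊕ Fin ((k - 1) / 2)),
      (∀ i, IsCycleGraphOn k (C i)) ∧
      (Pairwise fun i j => Disjoint (C i).edgeSet (C j).edgeSet) ∧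
      (⋃ i, (C i).edgeSet) = (plusW Γ (Fin ((k - 1) / 2))).edgeSet ∧
      (∀ i, ∃! e, e ∈ (C i).edgeSet ∧
        e ∈ (Γ.map (⟨Sum.inl, Sum.inl_injective⟩ : Fin (2 * k) ↪ Fin (2 * k) ⊕ Fin ((k - 1) / 2))).edgeSet) :=
  stmt8_general k hk hl Γ hΓ
end

section
/- Let k ≥ 3 be odd with ℓ = (k-1)/2 even, and let Γ be a k-cycle together with k isolated vertices, on a total of 2k vertices. Then Γ + ℓ decomposes into k cycles of length k, each containing exactly one edge of the k-cycle of Γ. -/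
open SimpleGraph

open Function

section PlusW

variable {V W : Type*} (H : SimpleGraph V)

@[simp]
lemma plusW_adj_inl_inl {u v : V} : (plusW H W).Adj (.inl u) (.inl v) ↔ H.Adj u v := by
  simp only [plusW, fromRel_adj]
  simpa [adj_comm] using H.ne_of_adj

@[simp]
lemma plusW_adj_inl_inr (u : V) (j : W) : (plusW H W).Adj (.inl u) (.inr j) := by
  simp [plusW]

@[simp]
lemma plusW_adj_inr_inl (u : V) (j : W) : (plusW H W).Adj (.inr j) (.inl u) :=
  (plusW_adj_inl_inr H u j).symm

@[simp]
lemma plusW_adj_inr_inr (i j : W) : ¬ (plusW H W).Adj (.inr i) (.inr j) := by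
  simp [plusW]

end PlusW

lemma ZMod.natCast_ne_zero_of_lt {a n : ℕ} (ha : a ≠ 0) (han : a < n) : (a : ZMod n) ≠ 0 := by
  rw [Ne, ZMod.natCast_eq_zero_iff]
  exact Nat.not_dvd_of_pos_of_lt (Nat.pos_of_ne_zero ha) han

lemma ZMod.one_ne_zero_of_lt {n : ℕ} (hn : 1 < n) : (1 : ZMod n) ≠ 0 := by
  exact_mod_cast ZMod.natCast_ne_zero_of_lt one_ne_zero hn

lemma ZMod.two_ne_zero_of_lt {n : ℕ} (hn : 2 < n) : (2 : ZMod n) ≠ 0 := by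
  exact_mod_cast ZMod.natCast_ne_zero_of_lt two_ne_zero hn

lemma ZMod.eq_of_natCast_eq_of_lt {a b n : ℕ} (ha : a < n) (hb : b < n) (h : (a : ZMod n) = b) :
    a = b := by
  rwa [ZMod.natCast_eq_natCast_iff', Nat.mod_eq_of_lt ha, Nat.mod_eq_of_lt hb] at h

section Cycle

variable {V : Type*} {k : ℕ}

def cycleThrough (f : ZMod k → V) : SimpleGraph V :=
  fromEdgeSet {e | ∃ t, e = s(f t, f (t + 1))}

lemma edgeSet_cycleThrough {f : ZMod k → V} (hf : Injective f) (h1 : (1 : ZMod k) ≠ 0) :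
    (cycleThrough f).edgeSet = {e | ∃ t, e = s(f t, f (t + 1))} := by
  rw [cycleThrough, edgeSet_fromEdgeSet, sdiff_eq_left, Set.disjoint_left]
  rintro _ ⟨t, rfl⟩ hdiag
  rw [Sym2.mem_diagSet, Sym2.mk_isDiag_iff] at hdiag
  exact h1 (by simpa using hf hdiag)

lemma isCycleGraphOn_cycleThrough {f : ZMod k → V} (hf : Injective f) (h1 : (1 : ZMod k) ≠ 0) :
    IsCycleGraphOn k (cycleThrough f) :=
  ⟨f, hf, edgeSet_cycleThrough hf h1⟩

lemma eq_of_sym2_mk_add_one_eq {c : ZMod k → V} (hc : Injective c) (h2 : (2 : ZMod k) ≠ 0)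
    {i j : ZMod k} (h : s(c i, c (i + 1)) = s(c j, c (j + 1))) : i = j := by
  rcases Sym2.eq_iff.mp h with ⟨hij, -⟩ | ⟨hij, hji⟩
  · exact hc hij
  · exact absurd (by linear_combination hc hji - hc hij) h2

end Cycle

section Interleave

variable {V : Type*}

def interleave (ℓ : ℕ) (g : ℕ → V) (t : ZMod (2 * ℓ + 1)) : V ⊕ Fin ℓ :=
  if h : t.val % 2 = 1 then .inr ⟨t.val / 2, by have := t.val_lt; omega⟩
  else .inl (g (t.val / 2))

lemma ZMod.exists_eq_two_mul_or_two_mul_add_one {ℓ : ℕ} (t : ZMod (2 * ℓ + 1)) :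
    (∃ q ≤ ℓ, t = ((2 * q : ℕ) : ZMod (2 * ℓ + 1))) ∨
      ∃ q : Fin ℓ, t = ((2 * q + 1 : ℕ) : ZMod (2 * ℓ + 1)) := by
  have ht := t.val_lt
  rw [← ZMod.natCast_zmod_val t]
  rcases Nat.even_or_odd' t.val with ⟨q, hq | hq⟩ <;> rw [hq]
  · exact .inl ⟨q, by omega, rfl⟩
  · exact .inr ⟨⟨q, by omega⟩, rfl⟩

variable {ℓ : ℕ} (g : ℕ → V)

lemma interleave_two_mul {q : ℕ} (hq : q ≤ ℓ) :
    interleave ℓ g ((2 * q : ℕ) : ZMod (2 * ℓ + 1)) = .inl (g q) := by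
  have hval : ((2 * q : ℕ) : ZMod (2 * ℓ + 1)).val = 2 * q := ZMod.val_natCast_of_lt (by omega)
  rw [interleave, dif_neg (by omega), hval, Nat.mul_div_cancel_left _ two_pos]

lemma interleave_two_mul_add_one (q : Fin ℓ) :
    interleave ℓ g ((2 * q + 1 : ℕ) : ZMod (2 * ℓ + 1)) = .inr q := by
  have hval : ((2 * q + 1 : ℕ) : ZMod (2 * ℓ + 1)).val = 2 * q + 1 :=
    ZMod.val_natCast_of_lt (by omega)
  rw [interleave, dif_pos (by omega)]
  exact congrArg Sum.inr (Fin.ext (by simp only [hval]; omega))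

lemma interleave_injective (hg : Set.InjOn g (Set.Iic ℓ)) :
    Injective (interleave ℓ g) := by
  intro t t' h
  rcases ZMod.exists_eq_two_mul_or_two_mul_add_one t with ⟨q, hq, rfl⟩ | ⟨q, rfl⟩ <;>
    rcases ZMod.exists_eq_two_mul_or_two_mul_add_one t' with ⟨q', hq', rfl⟩ | ⟨q', rfl⟩
  · rw [interleave_two_mul g hq, interleave_two_mul g hq', Sum.inl.injEq] at h
    rw [hg (Set.mem_Iic.mpr hq) (Set.mem_Iic.mpr hq') h]
  · rw [interleave_two_mul g hq, interleave_two_mul_add_one] at h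
    exact absurd h Sum.inl_ne_inr
  · rw [interleave_two_mul g hq', interleave_two_mul_add_one] at h
    exact absurd h Sum.inr_ne_inl
  · rw [interleave_two_mul_add_one, interleave_two_mul_add_one, Sum.inr.injEq] at h
    rw [h]

lemma exists_interleave_edge_iff (x : Sym2 (V ⊕ Fin ℓ)) :
    (∃ t, x = s(interleave ℓ g t, interleave ℓ g (t + 1))) ↔
      (∃ q : Fin ℓ, ∃ m, (m = q.val ∨ m = q.val + 1) ∧ x = s(.inl (g m), .inr q)) ∨
        x = s(.inl (g ℓ), .inl (g 0)) := by
  have succ_cast (n : ℕ) : (n : ZMod (2 * ℓ + 1)) + 1 = ((n + 1 : ℕ) : ZMod (2 * ℓ + 1)) := by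
    push_cast; rfl
  have last_add_one : ((2 * ℓ : ℕ) : ZMod (2 * ℓ + 1)) + 1 = ((2 * 0 : ℕ) : ZMod (2 * ℓ + 1)) := by
    rw [succ_cast, ZMod.natCast_self, mul_zero, Nat.cast_zero]
  constructor
  · rintro ⟨t, rfl⟩
    rcases ZMod.exists_eq_two_mul_or_two_mul_add_one t with ⟨q, hq, rfl⟩ | ⟨q, rfl⟩
    · rcases hq.lt_or_eq with hq | rfl
      · refine .inl ⟨⟨q, hq⟩, q, .inl rfl, ?_⟩
        rw [succ_cast, interleave_two_mul g hq.le, interleave_two_mul_add_one g ⟨q, hq⟩]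
      · rw [last_add_one, interleave_two_mul g le_rfl, interleave_two_mul g (Nat.zero_le _)]
        exact .inr rfl
    · refine .inl ⟨q, q + 1, .inr rfl, ?_⟩
      rw [succ_cast, show 2 * q.val + 1 + 1 = 2 * (q.val + 1) by ring,
        interleave_two_mul_add_one, interleave_two_mul g q.isLt, Sym2.eq_swap]
  · rintro (⟨q, m, rfl | rfl, rfl⟩ | rfl)
    · refine ⟨((2 * q : ℕ) : ZMod (2 * ℓ + 1)), ?_⟩
      rw [succ_cast, interleave_two_mul g q.isLt.le, interleave_two_mul_add_one]
    · refine ⟨((2 * q + 1 : ℕ) : ZMod (2 * ℓ + 1)), ?_⟩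
      rw [succ_cast, show 2 * q.val + 1 + 1 = 2 * (q.val + 1) by ring,
        interleave_two_mul_add_one, interleave_two_mul g q.isLt, Sym2.eq_swap]
    · refine ⟨((2 * ℓ : ℕ) : ZMod (2 * ℓ + 1)), ?_⟩
      rw [last_add_one, interleave_two_mul g le_rfl, interleave_two_mul g (Nat.zero_le _)]

end Interleave

section Pattern

variable {k : ℕ} (ℓ : ℕ)

def pattern (i : ZMod k) (m : ℕ) : ZMod k ⊕ ZMod k :=
  if m % 2 = 0 then .inl (i + ((if m = ℓ then 0 else m / 2 + 1 : ℕ) : ZMod k))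
  else .inr (i + ((m / 2 : ℕ) : ZMod k))

lemma pattern_zero (hℓ : ℓ ≠ 0) (i : ZMod k) : pattern ℓ i 0 = .inl (i + 1) := by
  simp [pattern, Ne.symm hℓ]

lemma pattern_self (hℓ : Even ℓ) (i : ZMod k) : pattern ℓ i ℓ = .inl i := by
  simp [pattern, Nat.even_iff.mp hℓ]

lemma mod_two_eq_of_pattern_eq {i j : ZMod k} {m m' : ℕ} (h : pattern ℓ i m = pattern ℓ j m') :
    m % 2 = m' % 2 := by
  unfold pattern at h
  split_ifs at h <;> omega

lemma pattern_left_injective (m : ℕ) : Injective fun i : ZMod k => pattern ℓ i m := by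
  intro i j h
  simp only [pattern] at h
  split_ifs at h <;> simpa using h

lemma pattern_injOn (hℓk : ℓ < k) (i : ZMod k) : Set.InjOn (pattern ℓ i) (Set.Iic ℓ) := by
  intro m hm m' hm' h
  rw [Set.mem_Iic] at hm hm'
  have hmod := mod_two_eq_of_pattern_eq ℓ h
  unfold pattern at h
  split_ifs at h <;> simp only [Sum.inl.injEq, Sum.inr.injEq, add_right_inj] at h
  all_goals first | omega | have := ZMod.eq_of_natCast_eq_of_lt (by omega) (by omega) h; omega

lemma exists_pattern_eq (x : ZMod k ⊕ ZMod k) (q : ℕ) :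
    ∃ i, x = pattern ℓ i q ∨ x = pattern ℓ i (q + 1) := by
  rcases x with a | a <;> rcases Nat.mod_two_eq_zero_or_one q with hq | hq
  · exact ⟨a - ((if q = ℓ then 0 else q / 2 + 1 : ℕ) : ZMod k),
      .inl (by simp only [pattern, if_pos hq, sub_add_cancel])⟩
  · exact ⟨a - ((if q + 1 = ℓ then 0 else (q + 1) / 2 + 1 : ℕ) : ZMod k),
      .inr (by simp only [pattern, if_pos (show (q + 1) % 2 = 0 by omega), sub_add_cancel])⟩
  · exact ⟨a - (((q + 1) / 2 : ℕ) : ZMod k),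
      .inr (by simp only [pattern, if_neg (show ¬(q + 1) % 2 = 0 by omega), sub_add_cancel])⟩
  · exact ⟨a - ((q / 2 : ℕ) : ZMod k),
      .inl (by simp only [pattern, if_neg (show ¬q % 2 = 0 by omega), sub_add_cancel])⟩

lemma eq_of_pattern_eq_of_consecutive {i j : ZMod k} {q m m' : ℕ} (hm : m = q ∨ m = q + 1)
    (hm' : m' = q ∨ m' = q + 1) (h : pattern ℓ i m = pattern ℓ j m') : i = j := by
  obtain rfl : m = m' := by have := mod_two_eq_of_pattern_eq ℓ h; omega
  exact pattern_left_injective ℓ m h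

end Pattern

lemma exists_sumEquiv_inl_eq {α V : Type*} [Fintype α] [Fintype V] {c : α → V}
    (hc : Injective c) (hcard : Fintype.card V = 2 * Fintype.card α) :
    ∃ b : α ⊕ α ≃ V, ∀ a, b (.inl a) = c a := by
  classical
  have hcompl : Fintype.card α = Fintype.card {v // v ∉ Set.range c} := by
    rw [Fintype.card_subtype_compl, ← Fintype.card_congr (Equiv.ofInjective c hc), hcard]
    omega
  exact ⟨(Equiv.sumCongr (Equiv.ofInjective c hc) (Fintype.equivOfCardEq hcompl)).trans
    (Equiv.sumCompl (· ∈ Set.range c)), fun _ => rfl⟩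

section Decomposition

variable {V : Type*} {ℓ : ℕ} (b : ZMod (2 * ℓ + 1) ⊕ ZMod (2 * ℓ + 1) ≃ V)

def decompCycle (i : ZMod (2 * ℓ + 1)) : SimpleGraph (V ⊕ Fin ℓ) :=
  cycleThrough (interleave ℓ fun m => b (pattern ℓ i m))

lemma injective_interleave_pattern (i : ZMod (2 * ℓ + 1)) :
    Injective (interleave ℓ fun m => b (pattern ℓ i m)) :=
  interleave_injective _ (b.injective.comp_injOn (pattern_injOn ℓ (by omega) i))

lemma mem_edgeSet_decompCycle (hℓ : Even ℓ) (hℓ0 : ℓ ≠ 0) (i : ZMod (2 * ℓ + 1))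
    (x : Sym2 (V ⊕ Fin ℓ)) :
    x ∈ (decompCycle b i).edgeSet ↔
      (∃ q : Fin ℓ, ∃ m, (m = q.val ∨ m = q.val + 1) ∧ x = s(.inl (b (pattern ℓ i m)), .inr q)) ∨
        x = s(.inl (b (.inl i)), .inl (b (.inl (i + 1)))) := by
  rw [decompCycle, edgeSet_cycleThrough (injective_interleave_pattern b i)
    (ZMod.one_ne_zero_of_lt (by omega)), Set.mem_ofPred_eq, exists_interleave_edge_iff,
    pattern_self ℓ hℓ, pattern_zero ℓ hℓ0]

lemma isCycleGraphOn_decompCycle (hℓ0 : ℓ ≠ 0) (i : ZMod (2 * ℓ + 1)) :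
    IsCycleGraphOn (2 * ℓ + 1) (decompCycle b i) :=
  isCycleGraphOn_cycleThrough (injective_interleave_pattern b i) (ZMod.one_ne_zero_of_lt (by omega))

variable {b}

lemma pairwise_disjoint_edgeSet_decompCycle (hℓ : Even ℓ) (hℓ0 : ℓ ≠ 0) :
    Pairwise fun i j => Disjoint (decompCycle b i).edgeSet (decompCycle b j).edgeSet := by
  intro i j hij
  refine Set.disjoint_left.mpr fun x hi hj => hij ?_
  rw [mem_edgeSet_decompCycle b hℓ hℓ0] at hi hj
  rcases hi with ⟨q, m, hm, rfl⟩ | rfl <;> rcases hj with ⟨q', m', hm', h⟩ | h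
  · obtain ⟨hbm, rfl⟩ : b (pattern ℓ i m) = b (pattern ℓ j m') ∧ q = q' := by simpa using h
    exact eq_of_pattern_eq_of_consecutive ℓ hm hm' (b.injective hbm)
  · simp at h
  · simp at h
  · exact eq_of_sym2_mk_add_one_eq (c := fun i => Sum.inl (b (.inl i)))
      (Sum.inl_injective.comp (b.injective.comp Sum.inl_injective))
      (ZMod.two_ne_zero_of_lt (by omega)) h

variable {Γ : SimpleGraph V}
  (hΓ : Γ.edgeSet = {x | ∃ i, x = s(b (.inl i), b (.inl (i + 1)))})
include hΓ

lemma adj_inl_inl_add_one (i : ZMod (2 * ℓ + 1)) : Γ.Adj (b (.inl i)) (b (.inl (i + 1))) := by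
  rw [← mem_edgeSet, hΓ]
  exact ⟨i, rfl⟩

lemma plusW_adj_of_mem_edgeSet_decompCycle (hℓ : Even ℓ) (hℓ0 : ℓ ≠ 0) {i : ZMod (2 * ℓ + 1)}
    {x y : V ⊕ Fin ℓ} (h : s(x, y) ∈ (decompCycle b i).edgeSet) : (plusW Γ (Fin ℓ)).Adj x y := by
  rcases (mem_edgeSet_decompCycle b hℓ hℓ0 i _).mp h with ⟨q, m, -, h⟩ | h <;>
    rcases Sym2.eq_iff.mp h with ⟨rfl, rfl⟩ | ⟨rfl, rfl⟩
  · exact plusW_adj_inl_inr Γ _ _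
  · exact plusW_adj_inr_inl Γ _ _
  · exact (plusW_adj_inl_inl Γ).mpr (adj_inl_inl_add_one hΓ i)
  · exact (plusW_adj_inl_inl Γ).mpr (adj_inl_inl_add_one hΓ i).symm

lemma exists_mem_edgeSet_decompCycle_of_plusW_adj (hℓ : Even ℓ) (hℓ0 : ℓ ≠ 0) {x y : V ⊕ Fin ℓ}
    (h : (plusW Γ (Fin ℓ)).Adj x y) : ∃ i, s(x, y) ∈ (decompCycle b i).edgeSet := by
  simp only [mem_edgeSet_decompCycle b hℓ hℓ0]
  have spoke (u : V) (q : Fin ℓ) : ∃ i, ∃ m, (m = q.val ∨ m = q.val + 1) ∧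
      (s(.inl u, .inr q) : Sym2 (V ⊕ Fin ℓ)) = s(.inl (b (pattern ℓ i m)), .inr q) := by
    obtain ⟨u, rfl⟩ := b.surjective u
    obtain ⟨i, rfl | rfl⟩ := exists_pattern_eq ℓ u q
    · exact ⟨i, _, .inl rfl, rfl⟩
    · exact ⟨i, _, .inr rfl, rfl⟩
  rcases x with u | q <;> rcases y with v | q'
  · have huv : s(u, v) ∈ Γ.edgeSet := (plusW_adj_inl_inl Γ).mp h
    rw [hΓ] at huv
    obtain ⟨i, hi⟩ := huv
    refine ⟨i, .inr ?_⟩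
    rcases Sym2.eq_iff.mp hi with ⟨rfl, rfl⟩ | ⟨rfl, rfl⟩
    · rfl
    · exact Sym2.eq_swap
  · obtain ⟨i, hi⟩ := spoke u q'
    exact ⟨i, .inl ⟨q', hi⟩⟩
  · obtain ⟨i, hi⟩ := spoke v q
    exact ⟨i, .inl ⟨q, by rwa [Sym2.eq_swap]⟩⟩
  · exact absurd h (plusW_adj_inr_inr Γ _ _)

lemma iUnion_edgeSet_decompCycle (hℓ : Even ℓ) (hℓ0 : ℓ ≠ 0) :
    ⋃ i, (decompCycle b i).edgeSet = (plusW Γ (Fin ℓ)).edgeSet := by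
  ext x
  induction x using Sym2.ind with | _ x y => ?_
  rw [Set.mem_iUnion, mem_edgeSet]
  exact ⟨fun ⟨_, h⟩ => plusW_adj_of_mem_edgeSet_decompCycle hΓ hℓ hℓ0 h,
    exists_mem_edgeSet_decompCycle_of_plusW_adj hΓ hℓ hℓ0⟩

lemma existsUnique_mem_edgeSet_decompCycle_map (hℓ : Even ℓ) (hℓ0 : ℓ ≠ 0)
    (i : ZMod (2 * ℓ + 1)) :
    ∃! x, x ∈ (decompCycle b i).edgeSet ∧ x ∈ (Γ.map Sum.inl).edgeSet := by
  refine ⟨s(.inl (b (.inl i)), .inl (b (.inl (i + 1)))),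
    ⟨(mem_edgeSet_decompCycle b hℓ hℓ0 i _).mpr (.inr rfl), ?_⟩, ?_⟩
  · have hadj := adj_inl_inl_add_one hΓ i
    exact map_adj_apply' hadj (Sum.inl_injective.ne hadj.ne)
  · rintro x ⟨hx, hΓx⟩
    rcases (mem_edgeSet_decompCycle b hℓ hℓ0 i x).mp hx with ⟨q, m, -, rfl⟩ | rfl
    · obtain ⟨-, _, _, -, -, h⟩ := hΓx
      exact absurd h Sum.inl_ne_inr
    · rfl

end Decomposition

/-- Let `k ≥ 3` be odd with `ℓ = (k-1)/2` even, and let `Γ` be a `k`-cycle together with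
`k` isolated vertices, on `2k` vertices in total. Then `Γ + ℓ` decomposes into `k` cycles
of length `k`, each containing exactly one edge of the `k`-cycle of `Γ`. -/
theorem stmt9 (k : ℕ) (hk3 : 3 ≤ k) (hk : Odd k) (hl : Even ((k - 1) / 2))
    (Γ : SimpleGraph (Fin (2 * k))) (hΓ : IsCycleGraphOn k Γ) :
    ∃ C : Fin k → SimpleGraph (Fin (2 * k) ⊕ Fin ((k - 1) / 2)),
      (∀ i, IsCycleGraphOn k (C i)) ∧
      (Pairwise fun i j => Disjoint (C i).edgeSet (C j).edgeSet) ∧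
      (⋃ i, (C i).edgeSet) = (plusW Γ (Fin ((k - 1) / 2))).edgeSet ∧
      (∀ i, ∃! e, e ∈ (C i).edgeSet ∧
        e ∈ (Γ.map Sum.inl).edgeSet) := by
  obtain ⟨ℓ, rfl⟩ := hk
  obtain ⟨c, hc, hΓ⟩ := hΓ
  rw [show (2 * ℓ + 1 - 1) / 2 = ℓ by omega] at hl ⊢
  have hℓ0 : ℓ ≠ 0 := by omega
  obtain ⟨b, rfl⟩ : ∃ b : ZMod (2 * ℓ + 1) ⊕ ZMod (2 * ℓ + 1) ≃ Fin (2 * (2 * ℓ + 1)),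
      c = fun i => b (.inl i) := by
    obtain ⟨b, hb⟩ := exists_sumEquiv_inl_eq hc (by simp)
    exact ⟨b, funext fun i => (hb i).symm⟩
  let σ := (ZMod.finEquiv (2 * ℓ + 1)).toEquiv
  refine ⟨fun i => decompCycle b (σ i), fun i => isCycleGraphOn_decompCycle b hℓ0 _,
    (pairwise_disjoint_edgeSet_decompCycle hl hℓ0).comp_of_injective σ.injective, ?_,
    fun i => existsUnique_mem_edgeSet_decompCycle_map hΓ hl hℓ0 _⟩
  rw [σ.surjective.iUnion_comp fun i => (decompCycle b i).edgeSet]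
  exact iUnion_edgeSet_decompCycle hΓ hl hℓ0
end

section
/- For any odd integer k = 2t+1 ≥ 7, there exists a k-sun S with vertices in Z_{4k+1} whose list of differences ΔS equals Z_{4k+1} \ {0} without repetition; consequently the 4k+1 translates of S under Z_{4k+1} form a k-sun system of K_{4k+1}. -/
open SimpleGraph

/-- A graph `H` is a `k`-sun: a `k`-cycle with one pendant edge attached to each
cycle vertex, all `2k` vertices distinct. -/
def IsSunOn {V : Type*} (k : ℕ) (H : SimpleGraph V) : Prop :=
  ∃ c q : ZMod k → V,
    Function.Injective (fun z : ZMod k × Bool => if z.2 then q z.1 else c z.1) ∧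
    H.edgeSet = {e | ∃ i : ZMod k, e = s(c i, c (i + 1)) ∨ e = s(c i, q i)}

/-- `D` is a decomposition of `G` into `k`-suns. -/
def IsSunDecomposition {V : Type*} (k : ℕ) (G : SimpleGraph V) (D : Set (SimpleGraph V)) :
    Prop :=
  (∀ H ∈ D, H ≤ G ∧ IsSunOn k H) ∧ ∀ e ∈ G.edgeSet, ∃! H, H ∈ D ∧ e ∈ H.edgeSet

/-- The `k`-sun with cycle vertices `c` and pendant vertices `q`. -/
def sunGraph {V : Type*} (k : ℕ) (c q : ZMod k → V) : SimpleGraph V :=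
  SimpleGraph.fromRel (fun x y => ∃ i : ZMod k,
    (x = c i ∧ y = c (i + 1)) ∨ (x = c i ∧ y = q i))

/-- Cycle vertex labels (as integers in `[0, 8t+5)`). -/
def sunC (t i : ℤ) : ℤ := if i % 2 = 0 then i / 2 else 4 * t + 2 - i / 2

/-- Pendant vertex labels (as integers in `[0, 8t+5)`). -/
def sunQ (t i : ℤ) : ℤ :=
  if i % 2 = 0 then (if i / 2 < t / 2 then 8 * t + 4 - i / 2 else 3 * (i / 2) + 2)
  else (if i / 2 < (t - 1) / 2 then 4 * t + 4 + i / 2 else 4 * t + 5 + i / 2)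

/-- Reduced signed difference of edge `(i,b)`: pendant edge if `b`, else cycle edge. -/
def sunR (t i : ℤ) (b : Bool) : ℤ :=
  if b then
    (if i % 2 = 0 then (if i / 2 < t / 2 then -(2 * (i / 2) + 1) else 2 * (i / 2) + 2)
     else (if i / 2 < (t - 1) / 2 then 2 * (i / 2) + 2 else 2 * (i / 2) + 3))
  else sunC t (if i = 2 * t then 0 else i + 1) - sunC t i

lemma lemRange (t i : ℤ) (ht : 3 ≤ t) (h1 : 0 ≤ i) (h2 : i < 2 * t + 1) :
    0 ≤ sunC t i ∧ sunC t i < 8 * t + 5 ∧ 0 ≤ sunQ t i ∧ sunQ t i < 8 * t + 5 := by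
  simp only [sunC, sunQ]; split_ifs <;> omega

lemma lemA (t : ℤ) (ht : 3 ≤ t) : ∀ i i' : ℤ, ∀ b b' : Bool,
    0 ≤ i → i < 2 * t + 1 → 0 ≤ i' → i' < 2 * t + 1 →
    (if b then sunQ t i else sunC t i) = (if b' then sunQ t i' else sunC t i') →
    b = b' ∧ i = i' := by
  intro i i' b b' h1 h2 h3 h4 h
  cases b <;> cases b' <;> simp only [if_true, if_false, Bool.false_eq_true, sunC, sunQ] at h
  · exact ⟨rfl, by split_ifs at h <;> omega⟩
  · exact False.elim (by split_ifs at h <;> omega)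
  · exact False.elim (by split_ifs at h <;> omega)
  · exact ⟨rfl, by split_ifs at h <;> omega⟩

lemma lemMod (t i : ℤ) (ht : 3 ≤ t) (h1 : 0 ≤ i) (h2 : i < 2 * t + 1) :
    (sunQ t i - sunC t i - sunR t i true = 0 ∨
      sunQ t i - sunC t i - sunR t i true = 8 * t + 5) ∧
    sunC t (if i = 2 * t then 0 else i + 1) - sunC t i - sunR t i false = 0 := by
  simp only [sunR, sunC, sunQ, if_true, if_false, Bool.false_eq_true]
  constructor
  · split_ifs <;> omega
  · split_ifs <;> omega

lemma lemB (t : ℤ) (ht : 3 ≤ t) : ∀ i : ℤ, ∀ b : Bool, 0 ≤ i → i < 2 * t + 1 →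
    sunR t i b ≠ 0 ∧ -(8 * t + 5) < 2 * sunR t i b ∧ 2 * sunR t i b < 8 * t + 5 := by
  intro i b h1 h2
  cases b <;> simp only [sunR, sunC, if_true, if_false, Bool.false_eq_true] <;>
    split_ifs <;> refine ⟨by omega, by omega, by omega⟩

lemma lemCinj (t : ℤ) (ht : 3 ≤ t) : ∀ i i' : ℤ, ∀ b b' : Bool,
    0 ≤ i → i < 2 * t + 1 → 0 ≤ i' → i' < 2 * t + 1 →
    sunR t i b = sunR t i' b' → i = i' ∧ b = b' := by
  intro i i' b b' h1 h2 h3 h4 h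
  cases b <;> cases b' <;>
    simp only [sunR, sunC, if_true, if_false, Bool.false_eq_true] at h
  · exact ⟨by split_ifs at h <;> omega, rfl⟩
  · exact False.elim (by split_ifs at h <;> omega)
  · exact False.elim (by split_ifs at h <;> omega)
  · exact ⟨by split_ifs at h <;> omega, rfl⟩

lemma lemCneg (t : ℤ) (ht : 3 ≤ t) : ∀ i i' : ℤ, ∀ b b' : Bool,
    0 ≤ i → i < 2 * t + 1 → 0 ≤ i' → i' < 2 * t + 1 →
    sunR t i b = -sunR t i' b' → False := by
  intro i i' b b' h1 h2 h3 h4 h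
  cases b <;> cases b' <;>
    simp only [sunR, sunC, if_true, if_false, Bool.false_eq_true] at h <;>
    split_ifs at h <;> omega

set_option maxHeartbeats 1000000 in
/-- For any odd `k = 2t + 1 ≥ 7` there is a `k`-sun `S` with vertices in `ZMod (4k+1)`
(cycle `c`, pendants `q`) whose list of differences (±signed differences over all `2k`
edges) covers `ZMod (4k+1) \ {0}` without repetition; consequently the translates of `S`
under `ZMod (4k+1)` form a `k`-sun system of `K_{4k+1}`. -/
theorem stmt10 (k t : ℕ) (ht : 3 ≤ t) (hk : k = 2 * t + 1) :
    ∃ c q : ZMod k → ZMod (4 * k + 1),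
      Function.Injective (fun z : ZMod k × Bool => if z.2 then q z.1 else c z.1) ∧
      Function.Injective (fun z : ZMod k × Bool × Bool =>
        (if z.2.2 then (1 : ZMod (4 * k + 1)) else -1) *
          (if z.2.1 then q z.1 - c z.1 else c (z.1 + 1) - c z.1)) ∧
      Set.range (fun z : ZMod k × Bool × Bool =>
        (if z.2.2 then (1 : ZMod (4 * k + 1)) else -1) *
          (if z.2.1 then q z.1 - c z.1 else c (z.1 + 1) - c z.1))
        = {x : ZMod (4 * k + 1) | x ≠ 0} ∧
      IsSunDecomposition k (⊤ : SimpleGraph (ZMod (4 * k + 1)))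
        {H | ∃ g : ZMod (4 * k + 1),
          H = sunGraph k (fun i => c i + g) (fun i => q i + g)} := by
  subst hk
  set K : ℕ := 2 * t + 1 with hKdef
  set N : ℕ := 4 * K + 1 with hNdef
  have htZ : (3 : ℤ) ≤ (t : ℤ) := by exact_mod_cast ht
  haveI : NeZero K := ⟨by omega⟩
  haveI : NeZero N := ⟨by omega⟩
  haveI : Fact (1 < K) := ⟨by omega⟩
  have hNZ : (N : ℤ) = 8 * (t : ℤ) + 5 := by rw [hNdef, hKdef]; push_cast; ring
  -- the vertex maps
  set c : ZMod K → ZMod N := fun i => ((sunC (t : ℤ) (i.val : ℤ) : ℤ) : ZMod N) with hcdef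
  set q : ZMod K → ZMod N := fun i => ((sunQ (t : ℤ) (i.val : ℤ) : ℤ) : ZMod N) with hqdef
  -- basic val facts
  have hiv : ∀ i : ZMod K, 0 ≤ (i.val : ℤ) ∧ (i.val : ℤ) < 2 * (t : ℤ) + 1 := by
    intro i
    have h2 : i.val < K := ZMod.val_lt i
    have h3 : i.val < 2 * t + 1 := by omega
    exact ⟨by positivity, by exact_mod_cast h3⟩
  have hvs : ∀ i : ZMod K,
      ((i + 1).val : ℤ) = if ((i.val : ℤ)) = 2 * (t : ℤ) then 0 else (i.val : ℤ) + 1 := by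
    intro i
    have h1 : (i + 1).val = (i.val + (1 : ZMod K).val) % K := ZMod.val_add i 1
    rw [ZMod.val_one] at h1
    have h2 : i.val < K := ZMod.val_lt i
    by_cases hc : i.val = 2 * t
    · rw [if_pos (by exact_mod_cast hc)]
      rw [h1, show i.val + 1 = K by omega, Nat.mod_self]
      simp
    · rw [if_neg (by intro h; exact hc (by exact_mod_cast h))]
      rw [h1, Nat.mod_eq_of_lt (by omega)]
      push_cast; ring
  -- cast injectivity
  have hInj : ∀ a b : ℤ, -(N : ℤ) < a - b → a - b < (N : ℤ) →
      ((a : ZMod N) = (b : ZMod N)) → a = b := by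
    intro a b hl hr h
    have h2 : ((a - b : ℤ) : ZMod N) = 0 := by push_cast; rw [h]; ring
    have h3 := (ZMod.intCast_zmod_eq_zero_iff_dvd _ N).mp h2
    have h4 := Int.eq_zero_of_abs_lt_dvd h3 (by rw [abs_lt]; exact ⟨hl, hr⟩)
    omega
  have hN0 : (((8 * (t : ℤ) + 5) : ℤ) : ZMod N) = 0 := by
    rw [show (8 * (t : ℤ) + 5) = ((N : ℕ) : ℤ) by rw [hNZ], Int.cast_natCast,
      ZMod.natCast_self]
  -- vertex injectivity
  have hinj1 : Function.Injective
      (fun z : ZMod K × Bool => if z.2 then q z.1 else c z.1) := by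
    rintro ⟨i, b⟩ ⟨i', b'⟩ h
    simp only at h
    have hval : (((if b then sunQ (t : ℤ) (i.val : ℤ) else sunC (t : ℤ) (i.val : ℤ)) : ℤ)
        : ZMod N) = (((if b' then sunQ (t : ℤ) (i'.val : ℤ) else sunC (t : ℤ) (i'.val : ℤ)) : ℤ)
        : ZMod N) := by
      cases b <;> cases b' <;> simpa [hcdef, hqdef] using h
    have hr1 := lemRange (t : ℤ) (i.val : ℤ) htZ (hiv i).1 (hiv i).2
    have hr2 := lemRange (t : ℤ) (i'.val : ℤ) htZ (hiv i').1 (hiv i').2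
    have heq := hInj _ _ (by rw [hNZ]; cases b <;> cases b' <;> simp only [if_true,
        if_false, Bool.false_eq_true] <;> omega)
      (by rw [hNZ]; cases b <;> cases b' <;> simp only [if_true, if_false,
        Bool.false_eq_true] <;> omega) hval
    obtain ⟨hb, hi⟩ := lemA (t : ℤ) htZ _ _ b b' (hiv i).1 (hiv i).2 (hiv i').1 (hiv i').2 heq
    have : i = i' := ZMod.val_injective _ (by exact_mod_cast hi)
    subst this; subst hb; rfl
  -- differences
  have hdiffP : ∀ i : ZMod K,
      q i - c i = ((sunR (t : ℤ) (i.val : ℤ) true : ℤ) : ZMod N) := by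
    intro i
    have hm := (lemMod (t : ℤ) (i.val : ℤ) htZ (hiv i).1 (hiv i).2).1
    have h0 : q i - c i
        = (((sunQ (t : ℤ) (i.val : ℤ) - sunC (t : ℤ) (i.val : ℤ)) : ℤ) : ZMod N) := by
      simp only [hcdef, hqdef]; push_cast; ring
    rw [h0]
    rcases hm with h | h
    · rw [show sunQ (t : ℤ) (i.val : ℤ) - sunC (t : ℤ) (i.val : ℤ)
          = sunR (t : ℤ) (i.val : ℤ) true by omega]
    · rw [show sunQ (t : ℤ) (i.val : ℤ) - sunC (t : ℤ) (i.val : ℤ)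
          = sunR (t : ℤ) (i.val : ℤ) true + (8 * (t : ℤ) + 5) by omega]
      rw [Int.cast_add, hN0, add_zero]
  have hdiffC : ∀ i : ZMod K,
      c (i + 1) - c i = ((sunR (t : ℤ) (i.val : ℤ) false : ℤ) : ZMod N) := by
    intro i
    have hm := (lemMod (t : ℤ) (i.val : ℤ) htZ (hiv i).1 (hiv i).2).2
    have h0 : c (i + 1) - c i
        = (((sunC (t : ℤ) (((i + 1).val : ℤ)) - sunC (t : ℤ) (i.val : ℤ)) : ℤ) : ZMod N) := by
      simp only [hcdef]; push_cast; ring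
    rw [h0, hvs i]
    rw [show sunC (t : ℤ) (if ((i.val : ℤ)) = 2 * (t : ℤ) then 0 else (i.val : ℤ) + 1)
        - sunC (t : ℤ) (i.val : ℤ) = sunR (t : ℤ) (i.val : ℤ) false by omega]
  -- signed difference values
  have hFval : ∀ (i : ZMod K) (b s : Bool),
      (if s then (1 : ZMod N) else -1) * (if b then q i - c i else c (i + 1) - c i)
      = (((if s then sunR (t : ℤ) (i.val : ℤ) b else -sunR (t : ℤ) (i.val : ℤ) b) : ℤ)
        : ZMod N) := by
    intro i b s
    cases b <;> cases s <;>
      simp only [if_true, if_false, Bool.false_eq_true, hdiffP, hdiffC] <;> push_cast <;> ring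
  have hsBound : ∀ (i : ZMod K) (b s : Bool),
      (if s then sunR (t : ℤ) (i.val : ℤ) b else -sunR (t : ℤ) (i.val : ℤ) b) ≠ 0 ∧
      -(8 * (t : ℤ) + 5) < 2 * (if s then sunR (t : ℤ) (i.val : ℤ) b
        else -sunR (t : ℤ) (i.val : ℤ) b) ∧
      2 * (if s then sunR (t : ℤ) (i.val : ℤ) b else -sunR (t : ℤ) (i.val : ℤ) b)
        < 8 * (t : ℤ) + 5 := by
    intro i b s
    have := lemB (t : ℤ) htZ (i.val : ℤ) b (hiv i).1 (hiv i).2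
    cases s <;> simp only [if_true, if_false, Bool.false_eq_true] <;>
      exact ⟨by omega, by omega, by omega⟩
  -- injectivity of the difference map
  have hinj2 : Function.Injective (fun z : ZMod K × Bool × Bool =>
      (if z.2.2 then (1 : ZMod N) else -1) *
        (if z.2.1 then q z.1 - c z.1 else c (z.1 + 1) - c z.1)) := by
    rintro ⟨i, b, s⟩ ⟨i', b', s'⟩ h
    simp only at h
    rw [hFval i b s, hFval i' b' s'] at h
    have hb1 := hsBound i b s
    have hb2 := hsBound i' b' s'
    have heq := hInj _ _ (by rw [hNZ]; omega) (by rw [hNZ]; omega) h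
    have key : (i.val : ℤ) = (i'.val : ℤ) ∧ b = b' ∧ s = s' := by
      cases s <;> cases s' <;> simp only [if_true, if_false, Bool.false_eq_true] at heq
      · obtain ⟨h1, h2⟩ := lemCinj (t : ℤ) htZ _ _ b b' (hiv i).1 (hiv i).2 (hiv i').1
          (hiv i').2 (by omega)
        exact ⟨h1, h2, rfl⟩
      · exact False.elim (lemCneg (t : ℤ) htZ _ _ b b' (hiv i).1 (hiv i).2 (hiv i').1
          (hiv i').2 (by omega))
      · exact False.elim (lemCneg (t : ℤ) htZ _ _ b b' (hiv i).1 (hiv i).2 (hiv i').1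
          (hiv i').2 (by omega))
      · obtain ⟨h1, h2⟩ := lemCinj (t : ℤ) htZ _ _ b b' (hiv i).1 (hiv i).2 (hiv i').1
          (hiv i').2 (by omega)
        exact ⟨h1, h2, rfl⟩
    obtain ⟨h1, h2, h3⟩ := key
    have : i = i' := ZMod.val_injective _ (by exact_mod_cast h1)
    subst this; subst h2; subst h3; rfl
  -- each value is nonzero
  have hne : ∀ (i : ZMod K) (b s : Bool),
      (if s then (1 : ZMod N) else -1) *
        (if b then q i - c i else c (i + 1) - c i) ≠ 0 := by
    intro i b s h
    rw [hFval i b s] at h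
    have h3 := (ZMod.intCast_zmod_eq_zero_iff_dvd _ N).mp h
    have hb := hsBound i b s
    have h4 := Int.eq_zero_of_abs_lt_dvd h3 (by rw [abs_lt, hNZ]; omega)
    omega
  -- range
  have hrange : Set.range (fun z : ZMod K × Bool × Bool =>
      (if z.2.2 then (1 : ZMod N) else -1) *
        (if z.2.1 then q z.1 - c z.1 else c (z.1 + 1) - c z.1))
      = {x : ZMod N | x ≠ 0} := by
    set F := fun z : ZMod K × Bool × Bool =>
      (if z.2.2 then (1 : ZMod N) else -1) *
        (if z.2.1 then q z.1 - c z.1 else c (z.1 + 1) - c z.1) with hFdef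
    have hcard1 : (Finset.univ.image F).card = 4 * K := by
      rw [Finset.card_image_of_injective _ hinj2, Finset.card_univ]
      simp only [Fintype.card_prod, Fintype.card_bool, ZMod.card]
      ring
    have hsub : Finset.univ.image F ⊆ Finset.univ.erase (0 : ZMod N) := by
      intro x hx
      obtain ⟨z, _, hz⟩ := Finset.mem_image.mp hx
      refine Finset.mem_erase.mpr ⟨?_, Finset.mem_univ x⟩
      rw [← hz]; exact hne z.1 z.2.1 z.2.2
    have hcard2 : (Finset.univ.erase (0 : ZMod N)).card = 4 * K := by
      rw [Finset.card_erase_of_mem (Finset.mem_univ _), Finset.card_univ, ZMod.card]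
      omega
    have heq := Finset.eq_of_subset_of_card_le hsub (by rw [hcard1, hcard2])
    ext x
    simp only [Set.mem_range, Set.mem_setOf_eq]
    constructor
    · rintro ⟨z, rfl⟩; exact hne z.1 z.2.1 z.2.2
    · intro hx
      have : x ∈ Finset.univ.image F := by
        rw [heq]; exact Finset.mem_erase.mpr ⟨hx, Finset.mem_univ x⟩
      obtain ⟨z, _, hz⟩ := Finset.mem_image.mp this
      exact ⟨z, hz⟩
  -- distinctness of vertices needed for graphs
  have hc_ne : ∀ i : ZMod K, c i ≠ c (i + 1) := by
    intro i h
    have h2 := hinj1 (a₁ := (i, false)) (a₂ := (i + 1, false)) (by simpa using h)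
    have h3 : i = i + 1 := congrArg Prod.fst h2
    have h4 : (1 : ZMod K) = 0 := by
      have := left_eq_add.mp h3; exact this
    have h5 := congrArg ZMod.val h4
    rw [ZMod.val_one, ZMod.val_zero] at h5
    exact one_ne_zero h5
  have hcq_ne : ∀ i : ZMod K, c i ≠ q i := by
    intro i h
    have h2 := hinj1 (a₁ := (i, false)) (a₂ := (i, true)) (by simpa using h)
    simpa using congrArg Prod.snd h2
  -- adjacency in translates
  have hadj : ∀ (g : ZMod N) (x y : ZMod N),
      (sunGraph K (fun i => c i + g) (fun i => q i + g)).Adj x y ↔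
      ∃ i : ZMod K, (x = c i + g ∧ y = c (i + 1) + g) ∨ (y = c i + g ∧ x = c (i + 1) + g) ∨
        (x = c i + g ∧ y = q i + g) ∨ (y = c i + g ∧ x = q i + g) := by
    intro g x y
    rw [sunGraph, SimpleGraph.fromRel_adj]
    constructor
    · rintro ⟨hne', h | h⟩ <;> obtain ⟨i, h⟩ := h <;> rcases h with ⟨h1, h2⟩ | ⟨h1, h2⟩
      · exact ⟨i, Or.inl ⟨h1, h2⟩⟩
      · exact ⟨i, Or.inr (Or.inr (Or.inl ⟨h1, h2⟩))⟩
      · exact ⟨i, Or.inr (Or.inl ⟨h1, h2⟩)⟩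
      · exact ⟨i, Or.inr (Or.inr (Or.inr ⟨h1, h2⟩))⟩
    · rintro ⟨i, ⟨h1, h2⟩ | ⟨h1, h2⟩ | ⟨h1, h2⟩ | ⟨h1, h2⟩⟩
      · exact ⟨by rw [h1, h2]; intro hh; exact hc_ne i (add_right_cancel hh),
          Or.inl ⟨i, Or.inl ⟨h1, h2⟩⟩⟩
      · exact ⟨by rw [h1, h2]; intro hh; exact hc_ne i (add_right_cancel hh.symm),
          Or.inr ⟨i, Or.inl ⟨h1, h2⟩⟩⟩
      · exact ⟨by rw [h1, h2]; intro hh; exact hcq_ne i (add_right_cancel hh),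
          Or.inl ⟨i, Or.inr ⟨h1, h2⟩⟩⟩
      · exact ⟨by rw [h1, h2]; intro hh; exact hcq_ne i (add_right_cancel hh.symm),
          Or.inr ⟨i, Or.inr ⟨h1, h2⟩⟩⟩
  -- edge set of translates
  have hedge : ∀ g : ZMod N,
      (sunGraph K (fun i => c i + g) (fun i => q i + g)).edgeSet
      = {e | ∃ i : ZMod K, e = s(c i + g, c (i + 1) + g) ∨ e = s(c i + g, q i + g)} := by
    intro g
    ext e
    induction e with
    | _ x y =>
      simp only [SimpleGraph.mem_edgeSet, Set.mem_setOf_eq, hadj g x y, Sym2.eq_iff]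
      constructor
      · rintro ⟨i, ⟨h1, h2⟩ | ⟨h1, h2⟩ | ⟨h1, h2⟩ | ⟨h1, h2⟩⟩
        · exact ⟨i, Or.inl (Or.inl ⟨h1, h2⟩)⟩
        · exact ⟨i, Or.inl (Or.inr ⟨h2, h1⟩)⟩
        · exact ⟨i, Or.inr (Or.inl ⟨h1, h2⟩)⟩
        · exact ⟨i, Or.inr (Or.inr ⟨h2, h1⟩)⟩
      · rintro ⟨i, (⟨h1, h2⟩ | ⟨h1, h2⟩) | (⟨h1, h2⟩ | ⟨h1, h2⟩)⟩
        · exact ⟨i, Or.inl ⟨h1, h2⟩⟩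
        · exact ⟨i, Or.inr (Or.inl ⟨h2, h1⟩)⟩
        · exact ⟨i, Or.inr (Or.inr (Or.inl ⟨h1, h2⟩))⟩
        · exact ⟨i, Or.inr (Or.inr (Or.inr ⟨h2, h1⟩))⟩
  -- assemble
  refine ⟨c, q, hinj1, hinj2, hrange, ?_, ?_⟩
  · -- every member of the family is a sun
    rintro H ⟨g, rfl⟩
    refine ⟨le_top, fun i => c i + g, fun i => q i + g, ?_, hedge g⟩
    intro a b h
    apply hinj1
    simp only at h ⊢
    rw [← apply_ite (fun v : ZMod N => v + g)] at h
    conv at h => rw [show (if b.2 then q b.1 + g else c b.1 + g)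
      = (if b.2 then q b.1 else c b.1) + g by rw [apply_ite (fun v : ZMod N => v + g)]]
    exact add_right_cancel h
  · -- every edge is in exactly one translate
    intro e he
    induction e with
    | _ x y =>
      rw [SimpleGraph.mem_edgeSet, SimpleGraph.top_adj] at he
      have hd : y - x ≠ 0 := sub_ne_zero.mpr (Ne.symm he)
      have hmem : (y - x) ∈ Set.range (fun z : ZMod K × Bool × Bool =>
          (if z.2.2 then (1 : ZMod N) else -1) *
            (if z.2.1 then q z.1 - c z.1 else c (z.1 + 1) - c z.1)) := by
        rw [hrange]; exact hd
      obtain ⟨⟨i, b, s⟩, hz⟩ := hmem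
      simp only at hz
      set G : ZMod N := x - (if b then (if s then c i else q i)
        else (if s then c i else c (i + 1))) with hGdef
      have key : ∀ g : ZMod N,
          (sunGraph K (fun j => c j + g) (fun j => q j + g)).Adj x y ↔ g = G := by
        intro g
        rw [hadj g x y]
        constructor
        · rintro ⟨i', ⟨h1, h2⟩ | ⟨h1, h2⟩ | ⟨h1, h2⟩ | ⟨h1, h2⟩⟩
          · have hv : (if (true : Bool) then (1 : ZMod N) else -1) *
                (if (false : Bool) then q i' - c i' else c (i' + 1) - c i') = y - x := by
              simp only [if_true, if_false, Bool.false_eq_true]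
              rw [h1, h2]; ring
            have := hinj2 (a₁ := (i', false, true)) (a₂ := (i, b, s))
              (by simpa using hv.trans hz.symm)
            simp only [Prod.mk.injEq] at this
            obtain ⟨hii, hbb, hss⟩ := this
            rw [hGdef, ← hbb, ← hss]
            simp only [if_true, if_false, Bool.false_eq_true]
            rw [h1, hii]; ring
          · have hv : (if (false : Bool) then (1 : ZMod N) else -1) *
                (if (false : Bool) then q i' - c i' else c (i' + 1) - c i') = y - x := by
              simp only [if_true, if_false, Bool.false_eq_true]
              rw [h1, h2]; ring
            have := hinj2 (a₁ := (i', false, false)) (a₂ := (i, b, s))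
              (by simpa using hv.trans hz.symm)
            simp only [Prod.mk.injEq] at this
            obtain ⟨hii, hbb, hss⟩ := this
            rw [hGdef, ← hbb, ← hss]
            simp only [if_true, if_false, Bool.false_eq_true]
            rw [h2, hii]; ring
          · have hv : (if (true : Bool) then (1 : ZMod N) else -1) *
                (if (true : Bool) then q i' - c i' else c (i' + 1) - c i') = y - x := by
              simp only [if_true, if_false]
              rw [h1, h2]; ring
            have := hinj2 (a₁ := (i', true, true)) (a₂ := (i, b, s))
              (by simpa using hv.trans hz.symm)
            simp only [Prod.mk.injEq] at this
            obtain ⟨hii, hbb, hss⟩ := this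
            rw [hGdef, ← hbb, ← hss]
            simp only [if_true, if_false, Bool.false_eq_true]
            rw [h1, hii]; ring
          · have hv : (if (false : Bool) then (1 : ZMod N) else -1) *
                (if (true : Bool) then q i' - c i' else c (i' + 1) - c i') = y - x := by
              simp only [if_true, if_false, Bool.false_eq_true]
              rw [h1, h2]; ring
            have := hinj2 (a₁ := (i', true, false)) (a₂ := (i, b, s))
              (by simpa using hv.trans hz.symm)
            simp only [Prod.mk.injEq] at this
            obtain ⟨hii, hbb, hss⟩ := this
            rw [hGdef, ← hbb, ← hss]
            simp only [if_true, if_false, Bool.false_eq_true]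
            rw [h2, hii]; ring
        · rintro rfl
          refine ⟨i, ?_⟩
          cases b <;> cases s <;>
            simp only [if_true, if_false, Bool.false_eq_true, hGdef] at hz ⊢
          · -- cycle, reversed
            refine Or.inr (Or.inl ⟨by linear_combination -hz, by ring⟩)
          · -- cycle, forward
            refine Or.inl ⟨by ring, by linear_combination -hz⟩
          · -- pendant, reversed
            refine Or.inr (Or.inr (Or.inr ⟨by linear_combination -hz, by ring⟩))
          · -- pendant, forward
            refine Or.inr (Or.inr (Or.inl ⟨by ring, by linear_combination -hz⟩))
      refine ⟨sunGraph K (fun j => c j + G) (fun j => q j + G), ⟨⟨G, rfl⟩, ?_⟩, ?_⟩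
      · rw [SimpleGraph.mem_edgeSet]; exact (key G).mpr rfl
      · rintro H' ⟨⟨g', rfl⟩, hmem'⟩
        rw [SimpleGraph.mem_edgeSet] at hmem'
        rw [(key g').mp hmem']
end

section
/- Let k ≥ 3 be odd and let g ≥ 3. Then there exists a k-sun system of the complete multipartite graph K_{g×4k} (g parts each of size 4k), assuming the existence of a k-cycle system of K_{g×2k}. -/
open SimpleGraph

/-- `D` is a decomposition of `G` into cycles of length `k`. -/
def IsCycleDecomposition {V : Type*} (k : ℕ) (G : SimpleGraph V) (D : Set (SimpleGraph V)) :
    Prop :=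
  (∀ H ∈ D, H ≤ G ∧ IsCycleGraphOn k H) ∧ ∀ e ∈ G.edgeSet, ∃! H, H ∈ D ∧ e ∈ H.edgeSet

namespace Stmt14Aux

variable {k g : ℕ}

/-- Split `Fin (4k)` into `Fin (2k)` and a `Bool` level. -/
def fe (k : ℕ) : Fin (4 * k) ≃ Fin (2 * k) × Bool :=
  ((finCongr (by ring : 4 * k = 2 * k * 2)).trans finProdFinEquiv.symm).trans
    ((Equiv.refl (Fin (2 * k))).prodCongr finTwoEquiv)

/-- Lift a vertex of `K_{g×2k}` to a vertex of `K_{g×4k}` at a given level. -/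
def up (x : Σ _ : Fin g, Fin (2 * k)) (b : Bool) : Σ _ : Fin g, Fin (4 * k) :=
  ⟨x.1, (fe k).symm (x.2, b)⟩

/-- Projection `K_{g×4k} → K_{g×2k}`. -/
def pr (u : Σ _ : Fin g, Fin (4 * k)) : Σ _ : Fin g, Fin (2 * k) :=
  ⟨u.1, ((fe k) u.2).1⟩

/-- Level of a vertex of `K_{g×4k}`. -/
def lv (u : Σ _ : Fin g, Fin (4 * k)) : Bool := ((fe k) u.2).2

lemma up_pr_lv (u : Σ _ : Fin g, Fin (4 * k)) : up (pr u) (lv u) = u := by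
  cases u with
  | mk a x => simp [up, pr, lv]

lemma pr_up (x : Σ _ : Fin g, Fin (2 * k)) (b : Bool) : pr (up x b) = x := by
  cases x with
  | mk a x => simp [up, pr]

lemma lv_up (x : Σ _ : Fin g, Fin (2 * k)) (b : Bool) : lv (up x b) = b := by
  simp [up, lv]

lemma up_inj {x y : Σ _ : Fin g, Fin (2 * k)} {a b : Bool} (h : up x a = up y b) :
    x = y ∧ a = b := by
  have h1 : pr (up x a) = pr (up y b) := by rw [h]
  have h2 : lv (up x a) = lv (up y b) := by rw [h]
  rw [pr_up, pr_up] at h1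
  rw [lv_up, lv_up] at h2
  exact ⟨h1, h2⟩

lemma zmod_two_ne (hk3 : 3 ≤ k) : (2 : ZMod k) ≠ 0 := by
  intro h
  have : ((2 : ℕ) : ZMod k) = 0 := by exact_mod_cast h
  rw [ZMod.natCast_eq_zero_iff] at this
  have := Nat.le_of_dvd (by norm_num) this
  omega

lemma zmod_one_ne (hk3 : 3 ≤ k) : (1 : ZMod k) ≠ 0 := by
  intro h
  have : ((1 : ℕ) : ZMod k) = 0 := by exact_mod_cast h
  rw [ZMod.natCast_eq_zero_iff] at this
  have := Nat.le_of_dvd (by norm_num) this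
  omega

lemma zmod_ne_add_one (hk3 : 3 ≤ k) (i : ZMod k) : i ≠ i + 1 := by
  intro h
  exact zmod_one_ne hk3 (left_eq_add.mp h)

/-- The edge set of one of the two suns over a blown-up `k`-cycle `c`. -/
def sunE (c : ZMod k → Σ _ : Fin g, Fin (2 * k)) (b : Bool) :
    Set (Sym2 (Σ _ : Fin g, Fin (4 * k))) :=
  {e | ∃ i : ZMod k, e = s(up (c i) b, up (c (i + 1)) b) ∨
      e = s(up (c i) b, up (c (i + 1)) (!b))}

/-- One of the two suns over a blown-up `k`-cycle `c`. -/
def sunG (c : ZMod k → Σ _ : Fin g, Fin (2 * k)) (b : Bool) :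
    SimpleGraph (Σ _ : Fin g, Fin (4 * k)) :=
  SimpleGraph.fromEdgeSet (sunE c b)

lemma pair_cases {x y z w : Σ _ : Fin g, Fin (2 * k)} {a a' b b' : Bool}
    (h : s(up x a, up y a') = s(up z b, up w b')) :
    (x = z ∧ y = w ∧ a = b ∧ a' = b') ∨ (x = w ∧ y = z ∧ a = b' ∧ a' = b) := by
  rw [Sym2.eq_iff] at h
  rcases h with ⟨h1, h2⟩ | ⟨h1, h2⟩
  · obtain ⟨e1, e2⟩ := up_inj h1
    obtain ⟨e3, e4⟩ := up_inj h2
    exact Or.inl ⟨e1, e3, e2, e4⟩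
  · obtain ⟨e1, e2⟩ := up_inj h1
    obtain ⟨e3, e4⟩ := up_inj h2
    exact Or.inr ⟨e1, e3, e2, e4⟩

lemma sunE_not_diag (hk3 : 3 ≤ k) {c : ZMod k → Σ _ : Fin g, Fin (2 * k)}
    (hc : Function.Injective c) {b : Bool} {e} (he : e ∈ sunE c b) : ¬ e.IsDiag := by
  obtain ⟨i, hi | hi⟩ := he <;>
  · subst hi
    rw [Sym2.mk_isDiag_iff]
    intro h
    exact zmod_ne_add_one hk3 i (hc (up_inj h).1)

lemma edgeSet_sunG (hk3 : 3 ≤ k) {c : ZMod k → Σ _ : Fin g, Fin (2 * k)}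
    (hc : Function.Injective c) (b : Bool) : (sunG c b).edgeSet = sunE c b := by
  rw [sunG, SimpleGraph.edgeSet_fromEdgeSet]
  ext e
  simp only [Set.mem_diff, Set.mem_setOf_eq, and_iff_left_iff_imp]
  exact fun he => sunE_not_diag hk3 hc he

lemma sunG_isSun (hk3 : 3 ≤ k) {c : ZMod k → Σ _ : Fin g, Fin (2 * k)}
    (hc : Function.Injective c) (b : Bool) : IsSunOn k (sunG c b) := by
  refine ⟨fun i => up (c i) b, fun i => up (c (i + 1)) (!b), ?_, ?_⟩
  · rintro ⟨i, bi⟩ ⟨j, bj⟩ h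
    simp only at h
    cases bi <;> cases bj <;> simp only [if_true, if_false, Bool.false_eq_true] at h
    · obtain ⟨h1, -⟩ := up_inj h
      simp [hc h1]
    · obtain ⟨-, h2⟩ := up_inj h
      simp at h2
    · obtain ⟨-, h2⟩ := up_inj h
      simp at h2
    · obtain ⟨h1, -⟩ := up_inj h
      have := hc h1
      simp [add_left_injective 1 this]
  · rw [edgeSet_sunG hk3 hc]
    rfl

lemma sunG_le (hk3 : 3 ≤ k) {c : ZMod k → Σ _ : Fin g, Fin (2 * k)}
    (hadj : ∀ i : ZMod k, (c i).1 ≠ (c (i + 1)).1) (b : Bool) :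
    sunG c b ≤ (SimpleGraph.completeMultipartiteGraph fun _ : Fin g => Fin (4 * k)) := by
  intro u v huv
  rw [sunG, SimpleGraph.fromEdgeSet_adj] at huv
  obtain ⟨⟨i, hi | hi⟩, -⟩ := huv <;>
  · rw [Sym2.eq_iff] at hi
    simp only [comap_adj, top_adj]
    rcases hi with ⟨h1, h2⟩ | ⟨h1, h2⟩ <;> subst h1 <;> subst h2 <;>
      first
      | simpa [up] using hadj i
      | simpa [up] using (hadj i).symm

lemma sunE_proj {c : ZMod k → Σ _ : Fin g, Fin (2 * k)} {b : Bool} {e}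
    (he : e ∈ sunE c b) : ∃ i : ZMod k, Sym2.map pr e = s(c i, c (i + 1)) := by
  obtain ⟨i, hi | hi⟩ := he <;>
  · subst hi
    exact ⟨i, by rw [Sym2.map_pair_eq, pr_up, pr_up]⟩

lemma sunE_level (hk3 : 3 ≤ k) {c : ZMod k → Σ _ : Fin g, Fin (2 * k)}
    (hc : Function.Injective c) {b1 b2 : Bool} {e}
    (h1 : e ∈ sunE c b1) (h2 : e ∈ sunE c b2) : b1 = b2 := by
  obtain ⟨i, hi⟩ := h1
  obtain ⟨j, hj⟩ := h2
  rcases hi with hi | hi <;> rcases hj with hj | hj <;>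
  · have h := hi.symm.trans hj
    rcases pair_cases h with ⟨-, -, hb, -⟩ | ⟨e1, e2, -, -⟩
    · exact hb
    · exfalso
      have h1 : i = j + 1 := hc e1
      have h2 : i + 1 = j := hc e2
      exact zmod_two_ne hk3 (by linear_combination h2 - h1)

lemma mem_sunE_of {c : ZMod k → Σ _ : Fin g, Fin (2 * k)} {u v : Σ _ : Fin g, Fin (4 * k)}
    {i : ZMod k} (hu : pr u = c i) (hv : pr v = c (i + 1)) :
    s(u, v) ∈ sunE c (lv u) := by
  have hu' : u = up (c i) (lv u) := by rw [← hu]; exact (up_pr_lv u).symm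
  have hv' : v = up (c (i + 1)) (lv v) := by rw [← hv]; exact (up_pr_lv v).symm
  refine ⟨i, ?_⟩
  by_cases hb : lv v = lv u
  · left
    rw [hu', hv', hb]
    simp only [lv_up]
  · right
    rw [hu', hv']
    have : lv v = !(lv u) := by
      revert hb; cases hval : lv u <;> cases hval2 : lv v <;> simp
    rw [this]
    simp only [lv_up]

end Stmt14Aux

open Stmt14Aux in
/-- Let `k ≥ 3` be odd and `g ≥ 3`. Assuming there is a `k`-cycle system of the complete
multipartite graph `K_{g×2k}`, there exists a `k`-sun system of `K_{g×4k}`. -/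
theorem stmt14 (k g : ℕ) (hk : Odd k) (hk3 : 3 ≤ k) (hg : 3 ≤ g)
    (hcyc : ∃ D, IsCycleDecomposition k
      (SimpleGraph.completeMultipartiteGraph (fun _ : Fin g => Fin (2 * k))) D) :
    ∃ D, IsSunDecomposition k
      (SimpleGraph.completeMultipartiteGraph (fun _ : Fin g => Fin (4 * k))) D := by
  classical
  obtain ⟨D, hDle, hDuniq⟩ := hcyc
  have hV2 : Nonempty (Σ _ : Fin g, Fin (2 * k)) :=
    ⟨⟨⟨0, by omega⟩, ⟨0, by omega⟩⟩⟩
  have key : ∀ H : SimpleGraph (Σ _ : Fin g, Fin (2 * k)),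
      ∃ c : ZMod k → Σ _ : Fin g, Fin (2 * k), H ∈ D →
        Function.Injective c ∧
          H.edgeSet = {e | ∃ i : ZMod k, e = s(c i, c (i + 1))} := by
    intro H
    by_cases h : H ∈ D
    · obtain ⟨c, hc1, hc2⟩ := (hDle H h).2
      exact ⟨c, fun _ => ⟨hc1, hc2⟩⟩
    · exact ⟨fun _ => Classical.arbitrary _, fun hh => absurd hh h⟩
  choose cc hcc using key
  refine ⟨{S | ∃ H ∈ D, ∃ b : Bool, S = sunG (cc H) b}, ?_, ?_⟩
  · rintro S ⟨H, hH, b, rfl⟩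
    obtain ⟨hinj, hedge⟩ := hcc H hH
    refine ⟨sunG_le hk3 (fun i => ?_) b, sunG_isSun hk3 hinj b⟩
    have hmem : s(cc H i, cc H (i + 1)) ∈ H.edgeSet := by
      rw [hedge]; exact ⟨i, rfl⟩
    have := (SimpleGraph.edgeSet_subset_edgeSet.mpr (hDle H hH).1) hmem
    rw [SimpleGraph.mem_edgeSet] at this
    simpa using this
  · intro e he
    induction e using Sym2.ind with
    | _ u v =>
      rw [SimpleGraph.mem_edgeSet] at he
      simp only [comap_adj, top_adj] at he
      -- the projected edge lies in the base graph
      have hproj : s(pr u, pr v) ∈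
          (SimpleGraph.completeMultipartiteGraph fun _ : Fin g => Fin (2 * k)).edgeSet := by
        rw [SimpleGraph.mem_edgeSet]
        simpa [pr] using he
      obtain ⟨H, ⟨hH, hmemH⟩, huniqH⟩ := hDuniq _ hproj
      obtain ⟨hinj, hedge⟩ := hcc H hH
      rw [hedge] at hmemH
      obtain ⟨i, hi⟩ := hmemH
      -- uniqueness, given a witness level
      have exuniq : ∀ b0 : Bool, s(u, v) ∈ sunE (cc H) b0 →
          ∃! S, (S ∈ {S | ∃ H ∈ D, ∃ b : Bool, S = sunG (cc H) b}) ∧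
            s(u, v) ∈ S.edgeSet := by
        intro b0 hb0
        refine ⟨sunG (cc H) b0, ⟨⟨H, hH, b0, rfl⟩, ?_⟩, ?_⟩
        · rw [edgeSet_sunG hk3 hinj]; exact hb0
        · rintro S ⟨⟨H', hH', b', rfl⟩, hmem'⟩
          obtain ⟨hinj', hedge'⟩ := hcc H' hH'
          rw [edgeSet_sunG hk3 hinj'] at hmem'
          obtain ⟨j, hj⟩ := sunE_proj hmem'
          rw [Sym2.map_pair_eq] at hj
          have hH'H : H' = H := by
            apply huniqH
            refine ⟨hH', ?_⟩
            rw [hedge']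
            exact ⟨j, hj⟩
          subst hH'H
          rw [sunE_level hk3 hinj hmem' hb0]
      rw [Sym2.eq_iff] at hi
      rcases hi with ⟨h1, h2⟩ | ⟨h1, h2⟩
      · exact exuniq (lv u) (mem_sunE_of h1 h2)
      · have := mem_sunE_of h2 h1
        rw [Sym2.eq_swap] at this
        exact exuniq (lv v) this
end

section
/- For k = 2t+1 ≥ 7, define the sequence c given by the k-cycle C = (0, -1, 1, -2, 2, -3, 3, ..., 1-t, t-1, -t, 2t) in the integers. Then the set of absolute values of differences of consecutive entries of C (cyclically) equals [1, 2t] ∪ {3t}, and these k values are pairwise distinct. -/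
/-!
Away from the last two positions the cycle alternates `0, -1, 1, -2, 2, …`, so the step out of
position `j` has length `j + 1`; this produces `1, …, 2t - 1`. The two exceptional steps are
`-t → 2t` of length `3t` and the closing step `2t → 0` of length `2t`.
-/

/-- The integer sequence of the cycle `C = (0, -1, 1, -2, 2, -3, 3, ..., 1-t, t-1, -t, 2t)`
on `k = 2t + 1` entries, indexed by `j ∈ [0, 2t]`. -/
def cseq (t : ℕ) (j : ℕ) : ℤ :=
  if j = 0 then 0
  else if j = 2 * t - 1 then -(t : ℤ)
  else if j = 2 * t then 2 * t
  else if j % 2 = 1 then -(((j : ℤ) + 1) / 2)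
  else (j : ℤ) / 2

def cycleGap (t j : ℕ) : ℤ :=
  if j = 2 * t then 2 * t else if j = 2 * t - 1 then 3 * t else j + 1

lemma abs_cseq_succ_sub_of_succ_lt {t j : ℕ} (hj : j + 1 < 2 * t) :
    |cseq t (j + 1) - cseq t j| = j + 1 := by
  grind [cseq]

lemma abs_cseq_two_mul_sub_pred (t : ℕ) : |cseq t (2 * t) - cseq t (2 * t - 1)| = 3 * t := by
  grind [cseq]

lemma abs_cseq_zero_sub_two_mul (t : ℕ) : |cseq t 0 - cseq t (2 * t)| = 2 * t := by
  grind [cseq]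

lemma abs_cseq_step_eq_cycleGap {t j : ℕ} (hj : j < 2 * t + 1) :
    |cseq t ((j + 1) % (2 * t + 1)) - cseq t j| = cycleGap t j := by
  obtain rfl | ⟨rfl, ht⟩ | hj : j = 2 * t ∨ (j = 2 * t - 1 ∧ 0 < t) ∨ j + 1 < 2 * t := by omega
  · simp [cycleGap, abs_cseq_zero_sub_two_mul]
  · rw [Nat.mod_eq_of_lt (by omega), Nat.sub_add_cancel (by omega),
      abs_cseq_two_mul_sub_pred, cycleGap, if_neg (by omega), if_pos rfl]
  · rw [Nat.mod_eq_of_lt (by omega), abs_cseq_succ_sub_of_succ_lt hj, cycleGap,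
      if_neg (by omega), if_neg (by omega)]

lemma cycleGap_injOn (t : ℕ) : Set.InjOn (cycleGap t) (Set.Iio (2 * t + 1)) := by
  intro i hi j hj hij
  simp only [Set.mem_Iio, cycleGap] at hi hj hij
  split_ifs at hij <;> omega

lemma cycleGap_image (t : ℕ) :
    cycleGap t '' Set.Iio (2 * t + 1) = Set.Icc (1 : ℤ) (2 * t) ∪ {(3 * t : ℤ)} := by
  ext x
  simp only [Set.mem_image, Set.mem_Iio, Set.mem_union, Set.mem_Icc, Set.mem_singleton_iff]
  constructor
  · rintro ⟨j, hj, rfl⟩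
    unfold cycleGap
    split_ifs <;> omega
  · rintro (⟨hx1, hx2⟩ | rfl)
    · obtain rfl | hx2 := hx2.eq_or_lt
      · exact ⟨2 * t, by omega, by simp [cycleGap]⟩
      · refine ⟨x.toNat - 1, by omega, ?_⟩
        rw [cycleGap, if_neg (by omega), if_neg (by omega)]
        omega
    · refine ⟨2 * t - 1, by omega, ?_⟩
      rcases t.eq_zero_or_pos with rfl | ht
      · simp [cycleGap]
      · rw [cycleGap, if_neg (by omega), if_pos rfl]

theorem stmt19_general (t : ℕ) :
    Function.Injective (fun j : Fin (2 * t + 1) =>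
      |cseq t (((j : ℕ) + 1) % (2 * t + 1)) - cseq t (j : ℕ)|) ∧
    Set.range (fun j : Fin (2 * t + 1) =>
        |cseq t (((j : ℕ) + 1) % (2 * t + 1)) - cseq t (j : ℕ)|)
      = Set.Icc (1 : ℤ) (2 * t) ∪ {(3 * t : ℤ)} := by
  have hgap : (fun j : Fin (2 * t + 1) =>
      |cseq t (((j : ℕ) + 1) % (2 * t + 1)) - cseq t (j : ℕ)|) = cycleGap t ∘ Fin.val :=
    funext fun j => abs_cseq_step_eq_cycleGap j.isLt
  rw [hgap, Set.range_comp, Fin.range_val]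
  exact ⟨((cycleGap_injOn t).injective_iff _ Fin.range_val.subset).2 Fin.val_injective,
    cycleGap_image t⟩

/-- For `k = 2t + 1 ≥ 7`, the absolute values of the differences of cyclically consecutive
entries of `C = (0, -1, 1, -2, 2, ..., 1-t, t-1, -t, 2t)` are pairwise distinct and form
exactly the set `[1, 2t] ∪ {3t}`. -/
theorem stmt19 (t : ℕ) (ht : 3 ≤ t) :
    Function.Injective (fun j : Fin (2 * t + 1) =>
      |cseq t (((j : ℕ) + 1) % (2 * t + 1)) - cseq t (j : ℕ)|) ∧
    Set.range (fun j : Fin (2 * t + 1) =>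
        |cseq t (((j : ℕ) + 1) % (2 * t + 1)) - cseq t (j : ℕ)|)
      = Set.Icc (1 : ℤ) (2 * t) ∪ {(3 * t : ℤ)} :=
  stmt19_general t
end
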